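/- arXiv:1806.11436 — 5 statements merged into one kernel-verified Lean document; each statement's English description precedes it below -/
import Mathlib

section
/- Let S, G_0 ∈ M_d(ℂ) be selfadjoint. The real-linear map sending a pair (X, Y) of skew-adjoint d×d complex matrices to [S, X] + [Y, G_0] is surjective onto the real space of selfadjoint d×d matrices with trace zero if and only if every matrix C ∈ M_d(ℂ) that commutes with both S and G_0 is a scalar multiple of the identity. -/
namespace LocalLidskii

open Matrix
open scoped ComplexOrder

/-- The non-increasing rearrangement of a vector `x ∈ ℝⁿ`. -/
noncomputable def sortDesc {n : ℕ} (x : Fin n → ℝ) : Fin n → ℝ :=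
  fun i => x (Tuple.sort x i.rev)

/-- The eigenvalues of a (Hermitian) matrix, counted with multiplicity and
arranged in non-increasing order. -/
noncomputable def eig {d : ℕ} (A : Matrix (Fin d) (Fin d) ℂ) : Fin d → ℝ :=
  if hA : A.IsHermitian then sortDesc hA.eigenvalues else 0

/-- The singular values of a matrix, arranged in non-increasing order. -/
noncomputable def sv {d : ℕ} (A : Matrix (Fin d) (Fin d) ℂ) : Fin d → ℝ :=
  sortDesc (fun i =>
    Real.sqrt ((Matrix.isHermitian_conjTranspose_mul_self A).eigenvalues i))

/-- The rank-one matrix `v ⊗ w : z ↦ ⟨z, w⟩ v`. -/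
noncomputable def rankOne {d : ℕ} (v w : Fin d → ℂ) : Matrix (Fin d) (Fin d) ℂ :=
  Matrix.vecMulVec v (star w)

/-- `v` is an orthonormal basis of `ℂ^d` (a family of `d` orthonormal vectors). -/
def IsONB {d : ℕ} (v : Fin d → (Fin d → ℂ)) : Prop :=
  ∀ i j, (∑ l, star (v i l) * v j l) = if i = j then (1 : ℂ) else 0

/-- `N` is a unitarily invariant norm on `M_d(ℂ)`. -/
structure IsUINorm (d : ℕ) (N : Matrix (Fin d) (Fin d) ℂ → ℝ) : Prop where
  add_le : ∀ A B, N (A + B) ≤ N A + N B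
  smul_eq : ∀ (c : ℂ) (A), N (c • A) = ‖c‖ * N A
  pos_of_ne : ∀ A, A ≠ 0 → 0 < N A
  unitary_invariant : ∀ (A U V : Matrix (Fin d) (Fin d) ℂ),
    U ∈ Matrix.unitaryGroup (Fin d) ℂ → V ∈ Matrix.unitaryGroup (Fin d) ℂ →
    N (U * A * V) = N A

/-- A norm is strictly convex when `N A = N B = N ((A+B)/2)` implies `A = B`. -/
def IsStrictlyConvexNorm (d : ℕ) (N : Matrix (Fin d) (Fin d) ℂ → ℝ) : Prop :=
  ∀ A B, N A = N B → N ((2 : ℂ)⁻¹ • (A + B)) = N A → A = B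

/-- The operator (spectral) norm of a matrix. -/
noncomputable def opNorm {d : ℕ} (A : Matrix (Fin d) (Fin d) ℂ) : ℝ :=
  ‖Matrix.toEuclideanCLM (𝕜 := ℂ) A‖

/-- The unitary orbit `O_μ` of all Hermitian matrices with sorted eigenvalue vector `μ`. -/
def Orbit {d : ℕ} (μ : Fin d → ℝ) : Set (Matrix (Fin d) (Fin d) ℂ) :=
  {G | G.IsHermitian ∧ eig G = μ}

/-- Sum of the `m` largest entries of `x`. -/
noncomputable def pSumDesc {n : ℕ} (x : Fin n → ℝ) (m : ℕ) : ℝ :=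
  ∑ i : Fin n, if (i : ℕ) < m then sortDesc x i else 0

/-- Submajorization `x ≺_w y`. -/
def Submaj {n : ℕ} (x y : Fin n → ℝ) : Prop :=
  ∀ m : ℕ, pSumDesc x m ≤ pSumDesc y m

/-- Majorization `x ≺ y`. -/
def Maj {n : ℕ} (x y : Fin n → ℝ) : Prop :=
  Submaj x y ∧ (∑ i, x i) = ∑ i, y i

/-- The frame operator `S_G = Σ g_i ⊗ g_i` of a finite family of vectors. -/
noncomputable def frameOp {d k : ℕ} (G : Fin k → (Fin d → ℂ)) : Matrix (Fin d) (Fin d) ℂ :=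
  ∑ i, rankOne (G i) (G i)

/-- Membership in `T_d(a)`: the `i`-th vector has squared norm `a i`. -/
def InFrameSet {d k : ℕ} (a : Fin k → ℝ) (G : Fin k → (Fin d → ℂ)) : Prop :=
  ∀ i, (∑ l, Complex.normSq (G i l)) = a i

/-- The Euclidean norm on `ℂ^d`. -/
noncomputable def vnorm {d : ℕ} (x : Fin d → ℂ) : ℝ :=
  Real.sqrt (∑ l, Complex.normSq (x l))

/-- The standard inner product `⟨x, y⟩ = Σ conj(x_l) y_l` on `ℂ^d`. -/
noncomputable def cip {d : ℕ} (x y : Fin d → ℂ) : ℂ := ∑ l, star (x l) * y l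

end LocalLidskii

/-!
For `L (X, Y) = ⁅S, X⁆ + ⁅Y, G₀⁆`, trace cyclicity gives
`tr (T * L (X, Y)) = tr (⁅T, S⁆ * X) + tr (Y * ⁅G₀, T⁆)`. So if `L` is onto the Hermitian
trace-zero matrices, a Hermitian `T` commuting with `S` and `G₀`, minus its scalar part, is
orthogonal to itself and hence zero; splitting into real and imaginary parts handles a general
`C` in the commutant. Conversely, for Hermitian `T`,
`tr (T * (ad_S² + ad_{G₀}²) T) = ‖⁅S, T⁆‖² + ‖⁅G₀, T⁆‖²`, so a trivial commutant makes
`ad_S² + ad_{G₀}²` injective, hence bijective, on the Hermitian trace-zero matrices, and it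
factors through `L`.
-/

section StarModule

variable {A : Type*} [Ring A] [StarRing A] [Module ℂ A] [StarModule ℂ A] [IsScalarTower ℂ A A]
  [SMulCommClass ℂ A A]

open ComplexStarModule

theorem Commute.realPart_left {a b : A} (hb : IsSelfAdjoint b) (h : Commute a b) :
    Commute (ℜ a : A) b := by
  rw [realPart_apply_coe]
  exact (h.add_left (hb.star_eq ▸ h.star_star)).smul_left _

theorem Commute.imaginaryPart_left {a b : A} (hb : IsSelfAdjoint b) (h : Commute a b) :
    Commute (ℑ a : A) b := by
  rw [imaginaryPart_apply_coe]
  exact ((h.sub_left (hb.star_eq ▸ h.star_star)).smul_left _).smul_left _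

theorem exists_eq_smul_one_of_commute_of_forall_isSelfAdjoint {s g : A} (hs : IsSelfAdjoint s)
    (hg : IsSelfAdjoint g)
    (h : ∀ t : A, IsSelfAdjoint t → Commute t s → Commute t g → ∃ c : ℂ, t = c • 1)
    {a : A} (has : Commute a s) (hag : Commute a g) : ∃ c : ℂ, a = c • 1 := by
  obtain ⟨x, hx⟩ := h (ℜ a) (ℜ a).2 (has.realPart_left hs) (hag.realPart_left hg)
  obtain ⟨y, hy⟩ := h (ℑ a) (ℑ a).2 (has.imaginaryPart_left hs) (hag.imaginaryPart_left hg)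
  refine ⟨x + Complex.I * y, ?_⟩
  rw [← realPart_add_I_smul_imaginaryPart a, hx, hy, smul_smul, add_smul]

end StarModule

namespace Matrix

open scoped ComplexOrder

section Trace

variable {n R : Type*} [Fintype n] [CommRing R]

theorem trace_mul_lie (A B C : Matrix n n R) : trace (A * ⁅B, C⁆) = trace (⁅A, B⁆ * C) := by
  simp only [Ring.lie_def, mul_sub, sub_mul, trace_sub, ← mul_assoc]
  rw [trace_mul_cycle A C B]

theorem trace_mul_lie_eq_zero_of_commute {A B : Matrix n n R} (h : Commute A B)
    (C : Matrix n n R) : trace (A * ⁅B, C⁆) = 0 := by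
  rw [trace_mul_lie, h.lie_eq, zero_mul, trace_zero]

end Trace

section Scalar

variable {n R : Type*} [Fintype n] [DecidableEq n] [Field R] [CharZero R]

theorem trace_sub_trace_div_card_smul_one (T : Matrix n n R) :
    trace (T - (trace T / Fintype.card n) • 1) = 0 := by
  rw [trace_sub, trace_smul, trace_one, smul_eq_mul, sub_eq_zero]
  rcases isEmpty_or_nonempty n with hn | hn
  · simp [trace]
  · exact (div_mul_cancel₀ _ (Nat.cast_ne_zero.mpr Fintype.card_ne_zero)).symm

theorem smul_one_eq_zero_of_trace_eq_zero {c : R} (h : trace (c • (1 : Matrix n n R)) = 0) :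
    c • (1 : Matrix n n R) = 0 := by
  rw [trace_smul, trace_one, smul_eq_mul, mul_eq_zero, Nat.cast_eq_zero,
    Fintype.card_eq_zero_iff] at h
  rcases h with rfl | hn
  · exact zero_smul R 1
  · exact Subsingleton.elim _ _

end Scalar

section ConjTranspose

variable {n α : Type*} [Fintype n] [CommRing α] [StarRing α]

theorem conjTranspose_lie (A B : Matrix n n α) : ⁅A, B⁆ᴴ = ⁅Bᴴ, Aᴴ⁆ := by
  simp only [Ring.lie_def, conjTranspose_sub, conjTranspose_mul]

theorem IsHermitian.conjTranspose_lie {S T : Matrix n n α} (hS : S.IsHermitian)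
    (hT : T.IsHermitian) : ⁅S, T⁆ᴴ = -⁅S, T⁆ := by
  rw [Matrix.conjTranspose_lie, hS.eq, hT.eq, Ring.lie_def, Ring.lie_def, neg_sub]

theorem IsHermitian.isHermitian_lie_of_skew {S X : Matrix n n α} (hS : S.IsHermitian)
    (hX : Xᴴ = -X) : ⁅S, X⁆.IsHermitian := by
  rw [IsHermitian, Matrix.conjTranspose_lie, hS.eq, hX, Ring.lie_def, Ring.lie_def, neg_mul,
    mul_neg, sub_neg_eq_add, neg_add_eq_sub]

theorem IsHermitian.isHermitian_lie_lie {S T : Matrix n n α} (hS : S.IsHermitian)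
    (hT : T.IsHermitian) : ⁅S, ⁅S, T⁆⁆.IsHermitian :=
  hS.isHermitian_lie_of_skew (hS.conjTranspose_lie hT)

theorem IsHermitian.trace_mul_lie_lie_self {S T : Matrix n n α} (hS : S.IsHermitian)
    (hT : T.IsHermitian) : trace (T * ⁅S, ⁅S, T⁆⁆) = trace (⁅S, T⁆ᴴ * ⁅S, T⁆) := by
  rw [trace_mul_lie, hS.conjTranspose_lie hT, Ring.lie_def, Ring.lie_def, neg_sub]

end ConjTranspose

section Complex

variable {n : Type*} [Fintype n]

theorem eq_zero_and_eq_zero_of_trace_add_eq_zero {X Y : Matrix n n ℂ}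
    (h : trace (Xᴴ * X) + trace (Yᴴ * Y) = 0) : X = 0 ∧ Y = 0 := by
  rw [add_eq_zero_iff_of_nonneg (posSemidef_conjTranspose_mul_self X).trace_nonneg
    (posSemidef_conjTranspose_mul_self Y).trace_nonneg] at h
  exact ⟨trace_conjTranspose_mul_self_eq_zero_iff.mp h.1,
    trace_conjTranspose_mul_self_eq_zero_iff.mp h.2⟩

theorem IsHermitian.eq_zero_of_commute_of_eq_lie_add_lie {T S G X Y : Matrix n n ℂ}
    (hT : T.IsHermitian) (hTS : Commute T S) (hTG : Commute T G) (h : ⁅S, X⁆ + ⁅Y, G⁆ = T) :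
    T = 0 := by
  refine trace_conjTranspose_mul_self_eq_zero_iff.mp ?_
  calc trace (Tᴴ * T) = trace (T * ⁅S, X⁆) + trace (⁅Y, G⁆ * T) := by
        rw [hT.eq, trace_mul_comm ⁅Y, G⁆, ← trace_add, ← mul_add, h]
    _ = 0 := by
        rw [trace_mul_lie_eq_zero_of_commute hTS, ← trace_mul_lie, hTG.symm.lie_eq, mul_zero,
          trace_zero, add_zero]

def hermitianTraceZero (n : Type*) [Fintype n] : Submodule ℝ (Matrix n n ℂ) where
  carrier := {T | T.IsHermitian ∧ trace T = 0}
  add_mem' ha hb := ⟨ha.1.add hb.1, by rw [trace_add, ha.2, hb.2, add_zero]⟩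
  zero_mem' := ⟨isHermitian_zero, trace_zero n ℂ⟩
  smul_mem' r _ ha := ⟨ha.1.smul (IsSelfAdjoint.all r), by rw [trace_smul, ha.2, smul_zero]⟩

/-- `ad_S² + ad_G²`, which is `L ∘ L*` for `L (X, Y) = ⁅S, X⁆ + ⁅Y, G⁆` and
`L* T = (⁅S, T⁆, ⁅T, G⁆)`. -/
def adSqSum (S G : Matrix n n ℂ) : Matrix n n ℂ →ₗ[ℝ] Matrix n n ℂ where
  toFun T := ⁅S, ⁅S, T⁆⁆ + ⁅G, ⁅G, T⁆⁆
  map_add' _ _ := by simp only [Ring.lie_def]; noncomm_ring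
  map_smul' _ _ := by
    simp only [Ring.lie_def, RingHom.id_apply, mul_sub, sub_mul, mul_smul_comm, smul_mul_assoc,
      smul_sub, smul_add]

theorem adSqSum_apply (S G T : Matrix n n ℂ) : adSqSum S G T = ⁅S, ⁅S, T⁆⁆ + ⁅G, ⁅G, T⁆⁆ :=
  rfl

theorem adSqSum_mem_hermitianTraceZero {S G T : Matrix n n ℂ} (hS : S.IsHermitian)
    (hG : G.IsHermitian) (hT : T ∈ hermitianTraceZero n) :
    adSqSum S G T ∈ hermitianTraceZero n :=
  ⟨(hS.isHermitian_lie_lie hT.1).add (hG.isHermitian_lie_lie hT.1), by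
    rw [adSqSum_apply, trace_add, LieAlgebra.matrix_trace_commutator_zero,
      LieAlgebra.matrix_trace_commutator_zero, add_zero]⟩

theorem commute_of_adSqSum_eq_zero {S G T : Matrix n n ℂ} (hS : S.IsHermitian)
    (hG : G.IsHermitian) (hT : T.IsHermitian) (h : adSqSum S G T = 0) :
    Commute T S ∧ Commute T G := by
  have hsq : trace (⁅S, T⁆ᴴ * ⁅S, T⁆) + trace (⁅G, T⁆ᴴ * ⁅G, T⁆) = 0 := by
    rw [← hS.trace_mul_lie_lie_self hT, ← hG.trace_mul_lie_lie_self hT, ← trace_add, ← mul_add,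
      ← adSqSum_apply, h, mul_zero, trace_zero]
  obtain ⟨hST, hGT⟩ := eq_zero_and_eq_zero_of_trace_add_eq_zero hsq
  exact ⟨(commute_iff_lie_eq.mpr hST).symm, (commute_iff_lie_eq.mpr hGT).symm⟩

variable [DecidableEq n]

theorem IsHermitian.exists_eq_smul_one_of_commute {T S G : Matrix n n ℂ} (hT : T.IsHermitian)
    (hTS : Commute T S) (hTG : Commute T G)
    (hsurj : ∀ T₀ : Matrix n n ℂ, T₀.IsHermitian → trace T₀ = 0 →
      ∃ X Y : Matrix n n ℂ, ⁅S, X⁆ + ⁅Y, G⁆ = T₀) :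
    ∃ c : ℂ, T = c • 1 := by
  set τ := trace T / Fintype.card n
  have hτ : IsSelfAdjoint τ := by
    rw [IsSelfAdjoint, star_div₀, star_natCast, ← trace_conjTranspose, hT.eq]
  have hT₀ : (T - τ • 1).IsHermitian := hT.sub (isHermitian_one.smul hτ)
  have hcomm : ∀ {A}, Commute T A → Commute (T - τ • 1) A := fun h =>
    h.sub_left ((Commute.one_left _).smul_left τ)
  obtain ⟨X, Y, hXY⟩ := hsurj _ hT₀ (trace_sub_trace_div_card_smul_one T)
  exact ⟨τ, sub_eq_zero.mp <|
    hT₀.eq_zero_of_commute_of_eq_lie_add_lie (hcomm hTS) (hcomm hTG) hXY⟩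

theorem surjOn_adSqSum {S G : Matrix n n ℂ} (hS : S.IsHermitian) (hG : G.IsHermitian)
    (hscalar : ∀ C : Matrix n n ℂ, Commute C S → Commute C G → ∃ c : ℂ, C = c • 1) :
    Set.SurjOn (adSqSum S G) (hermitianTraceZero n) (hermitianTraceZero n) := by
  refine (LinearMap.injOn_iff_surjOn fun _ ↦ adSqSum_mem_hermitianTraceZero hS hG).mp ?_
  intro T₁ hT₁ T₂ hT₂ h
  have hT : T₁ - T₂ ∈ hermitianTraceZero n := sub_mem hT₁ hT₂
  obtain ⟨hTS, hTG⟩ := commute_of_adSqSum_eq_zero hS hG hT.1 (by rw [map_sub, h, sub_self])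
  obtain ⟨c, hc⟩ := hscalar _ hTS hTG
  rw [← sub_eq_zero, hc]
  exact smul_one_eq_zero_of_trace_eq_zero (hc ▸ hT.2)

theorem exists_skew_lie_add_lie_eq {S G T : Matrix n n ℂ} (hS : S.IsHermitian)
    (hG : G.IsHermitian)
    (hscalar : ∀ C : Matrix n n ℂ, Commute C S → Commute C G → ∃ c : ℂ, C = c • 1)
    (hT : T.IsHermitian) (htr : trace T = 0) :
    ∃ X Y : Matrix n n ℂ, Xᴴ = -X ∧ Yᴴ = -Y ∧ ⁅S, X⁆ + ⁅Y, G⁆ = T := by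
  obtain ⟨T', hT', rfl⟩ := surjOn_adSqSum hS hG hscalar ⟨hT, htr⟩
  refine ⟨⁅S, T'⁆, ⁅T', G⁆, hS.conjTranspose_lie hT'.1, ?_, ?_⟩
  · rw [Matrix.conjTranspose_lie, hT'.1.eq, hG.eq, Ring.lie_def, Ring.lie_def, neg_sub]
  · simp only [adSqSum_apply, Ring.lie_def]
    noncomm_ring

end Complex

end Matrix

namespace LocalLidskii

open Matrix

/-- The differential of `Γ(U,V) = U* S U − V* G₀ V` at `(I, I)`, i.e. the real-linear map
`(X, Y) ↦ [S, X] + [Y, G₀]` on pairs of skew-adjoint matrices, is surjective onto the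
selfadjoint trace-zero matrices iff `{S, G₀}' = ℂ·I`. -/
theorem stmt_3 {d : ℕ} (S G0 : Matrix (Fin d) (Fin d) ℂ)
    (hS : S.IsHermitian) (hG0 : G0.IsHermitian) :
    (∀ T : Matrix (Fin d) (Fin d) ℂ, T.IsHermitian → T.trace = 0 →
      ∃ X Y : Matrix (Fin d) (Fin d) ℂ, Xᴴ = -X ∧ Yᴴ = -Y ∧
        (S * X - X * S) + (Y * G0 - G0 * Y) = T) ↔
      (∀ C : Matrix (Fin d) (Fin d) ℂ,
        C * S = S * C → C * G0 = G0 * C → ∃ c : ℂ, C = c • (1 : Matrix (Fin d) (Fin d) ℂ)) := by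
  simp only [← Ring.lie_def]
  constructor
  · intro hsurj C
    refine exists_eq_smul_one_of_commute_of_forall_isSelfAdjoint hS hG0 fun T hT hTS hTG ↦ ?_
    refine IsHermitian.exists_eq_smul_one_of_commute hT hTS hTG fun T₀ hT₀ htr ↦ ?_
    obtain ⟨X, Y, -, -, hXY⟩ := hsurj T₀ hT₀ htr
    exact ⟨X, Y, hXY⟩
  · exact fun hscalar T ↦ exists_skew_lie_add_lie_eq hS hG0 hscalar

end LocalLidskii
end

section
/- Let A ∈ M_d(ℂ), let s ∈ ℝ^d have non-negative non-increasing entries with s ≠ 0, let B ∈ V_s, and let N be a unitarily invariant norm on M_d(ℂ). Define Ξ : U(d)^4 → ℝ_{≥0} by Ξ(U_1, U_2, V_1, V_2) = N(U_1* A V_1 − U_2* B V_2), where U(d)^4 carries the metric given by the maximum over coordinates of ‖I − U* U'‖ (operator norm). Then the following are equivalent: (1) B is a local minimizer of Ψ(C) = N(A − C) on V_s; (2) (I, I, I, I) is a local minimizer of Ξ on U(d)^4. -/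
theorem LinearMap.exists_linearIsometry_apply_eq_of_norm_eq {𝕜 F E : Type*} [RCLike 𝕜]
    [AddCommGroup F] [Module 𝕜 F] [NormedAddCommGroup E] [InnerProductSpace 𝕜 E]
    [FiniteDimensional 𝕜 E] {x y : F →ₗ[𝕜] E} (h : ∀ v, ‖x v‖ = ‖y v‖) :
    ∃ L : E →ₗᵢ[𝕜] E, ∀ v, L (y v) = x v := by
  have hker : ker y ≤ ker x := fun v hv => by
    rw [mem_ker, ← norm_eq_zero, h, mem_ker.mp hv, norm_zero]
  let f := (ker y).liftQ x hker ∘ₗ y.quotKerEquivRange.symm.toLinearMap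
  have hf : ∀ v, f ⟨y v, mem_range_self y v⟩ = x v := fun v => by
    simp only [f, comp_apply, LinearEquiv.coe_coe]
    exact congrArg _ (y.quotKerEquivRange_symm_apply_image v _)
  let L : range y →ₗᵢ[𝕜] E :=
    { f with
      norm_map' := by
        rintro ⟨_, v, rfl⟩
        exact (congrArg norm (hf v)).trans (h v) }
  exact ⟨L.extend, fun v => (L.extend_apply ⟨y v, mem_range_self y v⟩).trans (hf v)⟩

namespace Matrix

open Filter Topology
open scoped Matrix.Norms.L2Operator

section UnitaryGroup

variable {n α : Type*} [Fintype n] [DecidableEq n] [CommRing α] [StarRing α] {U : Matrix n n α}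

theorem conjTranspose_mem_unitaryGroup (hU : U ∈ unitaryGroup n α) : Uᴴ ∈ unitaryGroup n α :=
  Unitary.star_mem hU

theorem conjTranspose_mul_self_of_mem_unitaryGroup (hU : U ∈ unitaryGroup n α) : Uᴴ * U = 1 :=
  Unitary.star_mul_self_of_mem hU

theorem mul_conjTranspose_self_of_mem_unitaryGroup (hU : U ∈ unitaryGroup n α) : U * Uᴴ = 1 :=
  Unitary.mul_star_self_of_mem hU

end UnitaryGroup

variable {𝕜 n : Type*} [RCLike 𝕜] [Fintype n] [DecidableEq n]

theorem isCompact_unitaryGroup : IsCompact (unitaryGroup n 𝕜 : Set (Matrix n n 𝕜)) :=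
  (isCompact_univ_pi fun _ => isCompact_univ_pi fun _ => isCompact_closedBall (0 : 𝕜) 1)
    |>.of_isClosed_subset (isClosed_unitary (R := Matrix n n 𝕜)) fun _ hU i _ j _ =>
      mem_closedBall_zero_iff.mpr (entry_norm_bound_of_unitary hU i j)

theorem IsHermitian.eigenvalues_eq_of_eq_comp_perm {A B : Matrix n n 𝕜} (hA : A.IsHermitian)
    (hB : B.IsHermitian) {σ : Equiv.Perm n} (h : hA.eigenvalues = hB.eigenvalues ∘ σ) :
    hA.eigenvalues = hB.eigenvalues := by
  rw [hA.eigenvalues_eq_eigenvalues_iff hB, hA.charpoly_eq, hB.charpoly_eq, h]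
  exact Equiv.prod_comp σ fun i => Polynomial.X - Polynomial.C (hB.eigenvalues i : 𝕜)

theorem IsHermitian.exists_mem_unitaryGroup_eq_mul_mul_conjTranspose {A B : Matrix n n 𝕜}
    (hA : A.IsHermitian) (hB : B.IsHermitian) (h : hA.eigenvalues = hB.eigenvalues) :
    ∃ W ∈ unitaryGroup n 𝕜, A = W * B * Wᴴ := by
  obtain ⟨UA, hUA, hA'⟩ : ∃ UA ∈ unitaryGroup n 𝕜,
      A = UA * diagonal (RCLike.ofReal ∘ hB.eigenvalues) * UAᴴ :=
    ⟨_, hA.eigenvectorUnitary.2, by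
      simpa only [h, Unitary.conjStarAlgAut_apply, star_eq_conjTranspose]
        using hA.spectral_theorem⟩
  obtain ⟨UB, hUB, hB'⟩ : ∃ UB ∈ unitaryGroup n 𝕜,
      B = UB * diagonal (RCLike.ofReal ∘ hB.eigenvalues) * UBᴴ :=
    ⟨_, hB.eigenvectorUnitary.2, by
      simpa only [Unitary.conjStarAlgAut_apply, star_eq_conjTranspose]
        using hB.spectral_theorem⟩
  generalize diagonal (RCLike.ofReal ∘ hB.eigenvalues : n → 𝕜) = D at hA' hB'
  refine ⟨UA * UBᴴ, mul_mem hUA (conjTranspose_mem_unitaryGroup hUB), ?_⟩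
  rw [hA', hB', conjTranspose_mul, conjTranspose_conjTranspose]
  simp only [mul_assoc, ← mul_assoc UBᴴ UB, conjTranspose_mul_self_of_mem_unitaryGroup hUB,
    one_mul]

theorem exists_mem_unitaryGroup_mul_eq_of_conjTranspose_mul_self_eq {X Y : Matrix n n 𝕜}
    (h : Xᴴ * X = Yᴴ * Y) : ∃ S ∈ unitaryGroup n 𝕜, X = S * Y := by
  set x := toEuclideanCLM (n := n) (𝕜 := 𝕜) X
  set y := toEuclideanCLM (n := n) (𝕜 := 𝕜) Y
  have hxy : ∀ v, ‖x v‖ = ‖y v‖ := by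
    have : star x * x = star y * y := by
      simp only [x, y, ← map_star, ← map_mul, star_eq_conjTranspose, h]
    intro v
    rw [← sq_eq_sq₀ (norm_nonneg _) (norm_nonneg _),
      ContinuousLinearMap.apply_norm_sq_eq_inner_adjoint_left,
      ContinuousLinearMap.apply_norm_sq_eq_inner_adjoint_left]
    exact congrArg (fun T : EuclideanSpace 𝕜 n →L[𝕜] _ => RCLike.re (inner 𝕜 (T v) v)) this
  obtain ⟨L, hL⟩ := LinearMap.exists_linearIsometry_apply_eq_of_norm_eq (x := x.toLinearMap)
    (y := y.toLinearMap) hxy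
  refine ⟨(toEuclideanCLM (n := n) (𝕜 := 𝕜)).symm L.toContinuousLinearMap, ?_, ?_⟩
  · rw [mem_unitaryGroup_iff']
    apply EquivLike.injective (toEuclideanCLM (n := n) (𝕜 := 𝕜))
    rw [map_mul, map_star, map_one, StarAlgEquiv.apply_symm_apply,
      ContinuousLinearMap.star_eq_adjoint]
    exact (ContinuousLinearMap.norm_map_iff_adjoint_comp_self _).mp L.norm_map
  · apply EquivLike.injective (toEuclideanCLM (n := n) (𝕜 := 𝕜))
    ext1 v
    rw [map_mul, StarAlgEquiv.apply_symm_apply]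
    exact (hL v).symm

theorem exists_mem_unitaryGroup_mul_mul_eq_of_eigenvalues_conjTranspose_mul_self_eq
    {X Y : Matrix n n 𝕜}
    (h : (isHermitian_conjTranspose_mul_self X).eigenvalues =
      (isHermitian_conjTranspose_mul_self Y).eigenvalues) :
    ∃ S ∈ unitaryGroup n 𝕜, ∃ T ∈ unitaryGroup n 𝕜, X = S * Y * T := by
  obtain ⟨W, hW, hXY⟩ := IsHermitian.exists_mem_unitaryGroup_eq_mul_mul_conjTranspose _ _ h
  obtain ⟨S, hS, rfl⟩ : ∃ S ∈ unitaryGroup n 𝕜, X = S * (Y * Wᴴ) := by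
    refine exists_mem_unitaryGroup_mul_eq_of_conjTranspose_mul_self_eq ?_
    rw [hXY, conjTranspose_mul, conjTranspose_conjTranspose, mul_assoc, mul_assoc, mul_assoc]
  exact ⟨S, hS, Wᴴ, conjTranspose_mem_unitaryGroup hW, (mul_assoc _ _ _).symm⟩

theorem eigenvalues_conjTranspose_mul_self_mul_mul_of_mem_unitaryGroup {A U V : Matrix n n 𝕜}
    (hU : U ∈ unitaryGroup n 𝕜) (hV : V ∈ unitaryGroup n 𝕜) :
    (isHermitian_conjTranspose_mul_self (U * A * V)).eigenvalues =
      (isHermitian_conjTranspose_mul_self A).eigenvalues := by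
  rw [IsHermitian.eigenvalues_eq_eigenvalues_iff]
  calc ((U * A * V)ᴴ * (U * A * V)).charpoly = (Vᴴ * (Aᴴ * A * V)).charpoly := by
        simp only [conjTranspose_mul, mul_assoc, ← mul_assoc Uᴴ U,
          conjTranspose_mul_self_of_mem_unitaryGroup hU, one_mul]
    _ = (Aᴴ * A).charpoly := by
        rw [charpoly_mul_comm, mul_assoc, mul_conjTranspose_self_of_mem_unitaryGroup hV, mul_one]

theorem exists_pos_dist_conjTranspose_mul_mul_lt (B : Matrix n n 𝕜) {ε : ℝ} (hε : 0 < ε) :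
    ∃ δ > 0, ∀ X₁ X₂ Y₁ Y₂ : Matrix n n 𝕜,
      max (max (dist X₁ 1) (dist X₂ 1)) (max (dist Y₁ 1) (dist Y₂ 1)) < δ →
        dist (X₁ᴴ * X₂ * B * (Y₂ᴴ * Y₁)) B < ε := by
  have hcont : ContinuousAt
      (fun p : (Matrix n n 𝕜 × Matrix n n 𝕜) × (Matrix n n 𝕜 × Matrix n n 𝕜) =>
        p.1.1ᴴ * p.1.2 * B * (p.2.2ᴴ * p.2.1)) ((1, 1), (1, 1)) := by
    fun_prop
  obtain ⟨δ, hδ, hclose⟩ := Metric.continuousAt_iff.mp hcont ε hε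
  refine ⟨δ, hδ, fun X₁ X₂ Y₁ Y₂ hX => ?_⟩
  simpa using hclose (x := ((X₁, X₂), (Y₁, Y₂))) (by simpa only [Prod.dist_eq] using hX)

theorem exists_pos_unitary_mul_mul_eq_near_one (B : Matrix n n 𝕜) {ε : ℝ} (hε : 0 < ε) :
    ∃ δ > 0, ∀ S ∈ unitaryGroup n 𝕜, ∀ T ∈ unitaryGroup n 𝕜, dist (S * B * T) B < δ →
      ∃ S' ∈ unitaryGroup n 𝕜, ∃ T' ∈ unitaryGroup n 𝕜,
        dist S' 1 < ε ∧ dist T' 1 < ε ∧ S * B * T = S' * B * T' := by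
  by_contra! hcon
  choose S hS T hT hnear hfar using fun k : ℕ => hcon (1 / (k + 1)) Nat.one_div_pos_of_nat
  obtain ⟨⟨u, v⟩, ⟨hu, hv⟩, φ, hφ, hUV⟩ :=
    (isCompact_unitaryGroup.prod isCompact_unitaryGroup).tendsto_subseq
      (x := fun k => (S k, T k)) fun k => ⟨hS k, hT k⟩
  have hSu : Tendsto (fun k => S (φ k)) atTop (𝓝 u) := (continuous_fst.tendsto _).comp hUV
  have hTv : Tendsto (fun k => T (φ k)) atTop (𝓝 v) := (continuous_snd.tendsto _).comp hUV
  have hSBT : Tendsto (fun k => S (φ k) * B * T (φ k)) atTop (𝓝 B) := by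
    rw [tendsto_iff_dist_tendsto_zero]
    exact squeeze_zero (fun _ => dist_nonneg) (fun k => (hnear (φ k)).le)
      (tendsto_one_div_add_atTop_nhds_zero_nat.comp hφ.tendsto_atTop)
  have hlim : u * B * v = B := tendsto_nhds_unique ((hSu.mul_const B).mul hTv) hSBT
  have hfix : uᴴ * B * vᴴ = B := by
    conv_lhs => rw [← hlim]
    simp only [mul_assoc, mul_conjTranspose_self_of_mem_unitaryGroup hv, mul_one,
      ← mul_assoc uᴴ, conjTranspose_mul_self_of_mem_unitaryGroup hu, one_mul]
  have hS1 : Tendsto (fun k => S (φ k) * uᴴ) atTop (𝓝 1) := by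
    simpa only [mul_conjTranspose_self_of_mem_unitaryGroup hu] using hSu.mul_const uᴴ
  have hT1 : Tendsto (fun k => vᴴ * T (φ k)) atTop (𝓝 1) := by
    simpa only [conjTranspose_mul_self_of_mem_unitaryGroup hv] using hTv.const_mul vᴴ
  obtain ⟨k, hk1, hk2⟩ := ((hS1.eventually (Metric.ball_mem_nhds 1 hε)).and
    (hT1.eventually (Metric.ball_mem_nhds 1 hε))).exists
  refine hfar (φ k) _ (mul_mem (hS _) (conjTranspose_mem_unitaryGroup hu)) _
    (mul_mem (conjTranspose_mem_unitaryGroup hv) (hT _)) hk1 hk2 ?_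
  calc S (φ k) * B * T (φ k) = S (φ k) * (uᴴ * B * vᴴ) * T (φ k) := by rw [hfix]
    _ = S (φ k) * uᴴ * B * (vᴴ * T (φ k)) := by simp only [mul_assoc]

end Matrix

namespace LocalLidskii

open Matrix
open scoped ComplexOrder Matrix.Norms.L2Operator

theorem opNorm_eq_norm {d : ℕ} (A : Matrix (Fin d) (Fin d) ℂ) : opNorm A = ‖A‖ := rfl

theorem IsUINorm.apply_conjTranspose_mul_mul_sub {d : ℕ} {N : Matrix (Fin d) (Fin d) ℂ → ℝ}
    (hN : IsUINorm d N) (A B : Matrix (Fin d) (Fin d) ℂ) {U₁ U₂ V₁ V₂ : Matrix (Fin d) (Fin d) ℂ}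
    (hU₁ : U₁ ∈ unitaryGroup (Fin d) ℂ) (hV₁ : V₁ ∈ unitaryGroup (Fin d) ℂ) :
    N (U₁ᴴ * A * V₁ - U₂ᴴ * B * V₂) = N (A - U₁ * U₂ᴴ * B * (V₂ * V₁ᴴ)) := by
  rw [← hN.unitary_invariant (A - _) U₁ᴴ V₁ (conjTranspose_mem_unitaryGroup hU₁) hV₁, mul_sub,
    sub_mul]
  simp only [← mul_assoc, conjTranspose_mul_self_of_mem_unitaryGroup hU₁, one_mul]
  simp only [mul_assoc, conjTranspose_mul_self_of_mem_unitaryGroup hV₁, mul_one]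

theorem exists_perm_eq_comp_of_sortDesc_eq {n : ℕ} {x y : Fin n → ℝ}
    (h : sortDesc x = sortDesc y) : ∃ σ : Equiv.Perm (Fin n), x = y ∘ σ := by
  refine ⟨(Fin.revPerm.trans (Tuple.sort x)).symm.trans (Fin.revPerm.trans (Tuple.sort y)),
    funext fun i => ?_⟩
  simpa [sortDesc] using congrFun h ((Fin.revPerm.trans (Tuple.sort x)).symm i)

theorem sv_mul_mul_of_mem_unitaryGroup {d : ℕ} {A U V : Matrix (Fin d) (Fin d) ℂ}
    (hU : U ∈ unitaryGroup (Fin d) ℂ) (hV : V ∈ unitaryGroup (Fin d) ℂ) :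
    sv (U * A * V) = sv A := by
  unfold sv
  rw [eigenvalues_conjTranspose_mul_self_mul_mul_of_mem_unitaryGroup hU hV]

theorem exists_mem_unitaryGroup_mul_mul_eq_of_sv_eq {d : ℕ} {B C : Matrix (Fin d) (Fin d) ℂ}
    (h : sv C = sv B) :
    ∃ S ∈ unitaryGroup (Fin d) ℂ, ∃ T ∈ unitaryGroup (Fin d) ℂ, C = S * B * T := by
  refine exists_mem_unitaryGroup_mul_mul_eq_of_eigenvalues_conjTranspose_mul_self_eq ?_
  obtain ⟨σ, hσ⟩ := exists_perm_eq_comp_of_sortDesc_eq h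
  refine IsHermitian.eigenvalues_eq_of_eq_comp_perm _ _ (σ := σ) (funext fun i => ?_)
  exact (Real.sqrt_inj ((posSemidef_conjTranspose_mul_self C).eigenvalues_nonneg i)
    ((posSemidef_conjTranspose_mul_self B).eigenvalues_nonneg (σ i))).mp (congrFun hσ i)

theorem stmt_7_general {d : ℕ} (N : Matrix (Fin d) (Fin d) ℂ → ℝ) (hN : IsUINorm d N)
    (A : Matrix (Fin d) (Fin d) ℂ) (s : Fin d → ℝ)
    (B : Matrix (Fin d) (Fin d) ℂ) (hB : sv B = s) :
    (∃ ε > 0, ∀ C : Matrix (Fin d) (Fin d) ℂ, sv C = s → opNorm (C - B) < ε →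
      N (A - B) ≤ N (A - C)) ↔
      (∃ ε > 0, ∀ U1 U2 V1 V2 : Matrix (Fin d) (Fin d) ℂ,
        U1 ∈ Matrix.unitaryGroup (Fin d) ℂ → U2 ∈ Matrix.unitaryGroup (Fin d) ℂ →
        V1 ∈ Matrix.unitaryGroup (Fin d) ℂ → V2 ∈ Matrix.unitaryGroup (Fin d) ℂ →
        max (max (opNorm (1 - U1ᴴ)) (opNorm (1 - U2ᴴ)))
            (max (opNorm (1 - V1ᴴ)) (opNorm (1 - V2ᴴ))) < ε →
        N (A - B) ≤ N (U1ᴴ * A * V1 - U2ᴴ * B * V2)) := by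
  constructor
  · rintro ⟨ε, hε, hmin⟩
    obtain ⟨δ, hδ, hclose⟩ := exists_pos_dist_conjTranspose_mul_mul_lt B hε
    refine ⟨δ, hδ, fun U₁ U₂ V₁ V₂ hU₁ hU₂ hV₁ hV₂ hmax => ?_⟩
    simp only [opNorm_eq_norm, ← dist_eq_norm, dist_comm (1 : Matrix (Fin d) (Fin d) ℂ)] at hmax
    rw [hN.apply_conjTranspose_mul_mul_sub A B hU₁ hV₁]
    refine hmin _ ?_ ?_
    · rw [sv_mul_mul_of_mem_unitaryGroup (mul_mem hU₁ (conjTranspose_mem_unitaryGroup hU₂))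
        (mul_mem hV₂ (conjTranspose_mem_unitaryGroup hV₁)), hB]
    · simpa only [conjTranspose_conjTranspose, dist_eq_norm, opNorm_eq_norm] using
        hclose U₁ᴴ U₂ᴴ V₁ᴴ V₂ᴴ hmax
  · rintro ⟨ε, hε, hmin⟩
    obtain ⟨δ, hδ, hlift⟩ := exists_pos_unitary_mul_mul_eq_near_one B hε
    refine ⟨δ, hδ, fun C hC hCB => ?_⟩
    obtain ⟨S, hS, T, hT, rfl⟩ := exists_mem_unitaryGroup_mul_mul_eq_of_sv_eq (hC.trans hB.symm)
    obtain ⟨S', hS', T', hT', hS'1, hT'1, hST⟩ := hlift S hS T hT (by rwa [dist_eq_norm])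
    have h := hmin 1 S'ᴴ T'ᴴ 1 (one_mem _) (conjTranspose_mem_unitaryGroup hS')
      (conjTranspose_mem_unitaryGroup hT') (one_mem _) (by
        simpa only [opNorm_eq_norm, conjTranspose_one, conjTranspose_conjTranspose, sub_self,
          norm_zero, ← dist_eq_norm, dist_comm (1 : Matrix (Fin d) (Fin d) ℂ), max_lt_iff, hε,
          true_and, and_true] using ⟨hS'1, hT'1⟩)
    rw [hN.apply_conjTranspose_mul_mul_sub A B (one_mem _)
      (conjTranspose_mem_unitaryGroup hT')] at h
    simpa [hST] using h

/-- `B` is a local minimizer of `Ψ(C) = N(A − C)` on `V_s` iff `(I,I,I,I)` is a local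
minimizer of `Ξ(U₁,U₂,V₁,V₂) = N(U₁* A V₁ − U₂* B V₂)` on `U(d)⁴`. -/
theorem stmt_7 {d : ℕ} (N : Matrix (Fin d) (Fin d) ℂ → ℝ) (hN : IsUINorm d N)
    (A : Matrix (Fin d) (Fin d) ℂ) (s : Fin d → ℝ)
    (hs : Antitone s) (hs0 : ∀ i, 0 ≤ s i) (hsne : s ≠ 0)
    (B : Matrix (Fin d) (Fin d) ℂ) (hB : sv B = s) :
    (∃ ε > 0, ∀ C : Matrix (Fin d) (Fin d) ℂ, sv C = s → opNorm (C - B) < ε →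
      N (A - B) ≤ N (A - C)) ↔
      (∃ ε > 0, ∀ U1 U2 V1 V2 : Matrix (Fin d) (Fin d) ℂ,
        U1 ∈ Matrix.unitaryGroup (Fin d) ℂ → U2 ∈ Matrix.unitaryGroup (Fin d) ℂ →
        V1 ∈ Matrix.unitaryGroup (Fin d) ℂ → V2 ∈ Matrix.unitaryGroup (Fin d) ℂ →
        max (max (opNorm (1 - U1ᴴ)) (opNorm (1 - U2ᴴ)))
            (max (opNorm (1 - V1ᴴ)) (opNorm (1 - V2ᴴ))) < ε →
        N (A - B) ≤ N (U1ᴴ * A * V1 - U2ᴴ * B * V2)) :=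
  stmt_7_general N hN A s B hB

end LocalLidskii
end

section
/- Let A, B ∈ M_d(ℂ). The real-linear map sending a quadruple (X_1, X_2, Y_1, Y_2) of skew-adjoint d×d complex matrices to −X_1 A + A Y_1 + X_2 B − B Y_2 ∈ M_d(ℂ) is surjective onto M_d(ℂ) if and only if the only matrix Z ∈ M_d(ℂ) such that A*Z, AZ*, B*Z and BZ* are all selfadjoint is Z = 0. -/
namespace LocalLidskii

open Matrix
open scoped ComplexOrder

/-!
For the real Frobenius form `⟪X, Y⟫ = Re tr (Xᴴ Y)`, which is symmetric and nondegenerate on the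
finite-dimensional real space `M_d(ℂ)`, a subspace is everything iff its orthogonal complement is
zero. Cycling the trace, `Z` is orthogonal to the range of the differential iff
`Re tr (P X) = 0` for every skew-adjoint `X`, for each of `P = A Zᴴ, Zᴴ A, B Zᴴ, Zᴴ B`; and this
holds iff `P` is Hermitian, the skew-adjoint matrices being the orthogonal complement of the
Hermitian ones.
-/

theorem eq_top_iff_orthogonal_eq_bot {K V : Type*} [Field K] [AddCommGroup V] [Module K V]
    [FiniteDimensional K V] {B : LinearMap.BilinForm K V} (hB : B.Nondegenerate)
    (hB' : B.IsRefl) {W : Submodule K V} : W = ⊤ ↔ B.orthogonal W = ⊥ := by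
  refine ⟨fun h => h ▸ LinearMap.BilinForm.orthogonal_top_eq_bot hB, fun h => ?_⟩
  rw [← LinearMap.BilinForm.orthogonal_orthogonal hB hB' W, h,
    LinearMap.BilinForm.orthogonal_bot]

section

open LinearMap (BilinForm)

variable {n : Type*}

variable (n) in
noncomputable abbrev SkewMatrix : Submodule ℝ (Matrix n n ℂ) :=
  skewAdjoint.submodule ℝ (Matrix n n ℂ)

theorem mem_skewMatrix_iff {X : Matrix n n ℂ} : X ∈ SkewMatrix n ↔ Xᴴ = -X := Iff.rfl

variable [Fintype n]

theorem re_trace_conjTranspose_mul_self_eq_zero_iff {N : Matrix n n ℂ} :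
    (Nᴴ * N).trace.re = 0 ↔ N = 0 := by
  have hnonneg := (posSemidef_conjTranspose_mul_self N).trace_nonneg
  rw [← trace_conjTranspose_mul_self_eq_zero_iff]
  exact ⟨fun hre => Complex.ext hre (Complex.nonneg_iff.mp hnonneg).2.symm,
    fun h => by simp [h]⟩

theorem re_trace_conjTranspose_mul_comm (X Y : Matrix n n ℂ) :
    (Xᴴ * Y).trace.re = (Yᴴ * X).trace.re := by
  rw [← conjTranspose_conjTranspose X, ← conjTranspose_mul, trace_conjTranspose,
    conjTranspose_conjTranspose]
  exact Complex.conj_re _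

variable (n) in
noncomputable def frobeniusForm : BilinForm ℝ (Matrix n n ℂ) :=
  LinearMap.mk₂ ℝ (fun X Y => (Xᴴ * Y).trace.re)
    (fun X X' Y => by simp [Matrix.add_mul])
    (fun r X Y => by simp)
    (fun X Y Y' => by simp [Matrix.mul_add])
    (fun r X Y => by simp)

theorem frobeniusForm_apply (X Y : Matrix n n ℂ) :
    frobeniusForm n X Y = (Xᴴ * Y).trace.re := rfl

theorem frobeniusForm_isSymm : (frobeniusForm n).IsSymm :=
  ⟨re_trace_conjTranspose_mul_comm⟩

theorem frobeniusForm_nondegenerate : (frobeniusForm n).Nondegenerate :=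
  frobeniusForm_isSymm.isRefl.nondegenerate_iff_separatingLeft.mpr fun X hX =>
    re_trace_conjTranspose_mul_self_eq_zero_iff.mp (hX X)

theorem isHermitian_iff_forall_mem_skewMatrix_re_trace_mul_eq_zero (M : Matrix n n ℂ) :
    M.IsHermitian ↔ ∀ X ∈ SkewMatrix n, (M * X).trace.re = 0 := by
  simp only [mem_skewMatrix_iff]
  constructor
  · intro hM X hX
    have hstar : star (M * X).trace = -(M * X).trace := by
      rw [← trace_conjTranspose, conjTranspose_mul, hX, hM.eq, Matrix.neg_mul, trace_neg,
        trace_mul_comm]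
    have hre := congrArg Complex.re hstar
    rw [Complex.star_def, Complex.conj_re, Complex.neg_re] at hre
    linarith
  · intro h
    set N := M - Mᴴ
    have hN : Nᴴ = -N := by simp [N]
    have hMN : (Mᴴ * N).trace.re = 0 := by
      rw [← re_trace_conjTranspose_mul_comm, hN, Matrix.neg_mul, trace_neg, trace_mul_comm,
        Complex.neg_re, h N hN, neg_zero]
    have hNN : (Nᴴ * N).trace.re = 0 := by
      have hNN_eq : Nᴴ * N = Mᴴ * N - M * N := by
        rw [hN, Matrix.neg_mul, neg_eq_iff_eq_neg, neg_sub]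
        exact Matrix.sub_mul M Mᴴ N
      rw [hNN_eq, trace_sub, Complex.sub_re, hMN, h N hN, sub_zero]
    exact (sub_eq_zero.mp (re_trace_conjTranspose_mul_self_eq_zero_iff.mp hNN)).symm

noncomputable def differentialAtOne (A B : Matrix n n ℂ) :
    SkewMatrix n × SkewMatrix n × SkewMatrix n × SkewMatrix n →ₗ[ℝ] Matrix n n ℂ where
  toFun v := -(v.1 * A) + A * v.2.2.1 + v.2.1 * B - B * v.2.2.2
  map_add' v w := by
    simp only [Prod.fst_add, Prod.snd_add, Submodule.coe_add, Matrix.add_mul, Matrix.mul_add]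
    abel
  map_smul' r v := by
    simp only [Prod.smul_fst, Prod.smul_snd, Submodule.coe_smul, smul_mul_assoc, mul_smul_comm,
      RingHom.id_apply, smul_add, smul_sub, smul_neg]

theorem range_differentialAtOne_eq_top_iff (A B : Matrix n n ℂ) :
    LinearMap.range (differentialAtOne A B) = ⊤ ↔
      ∀ M : Matrix n n ℂ, ∃ X1 X2 Y1 Y2 : Matrix n n ℂ,
        X1ᴴ = -X1 ∧ X2ᴴ = -X2 ∧ Y1ᴴ = -Y1 ∧ Y2ᴴ = -Y2 ∧
        -(X1 * A) + A * Y1 + X2 * B - B * Y2 = M := by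
  simp [LinearMap.range_eq_top, Function.Surjective, differentialAtOne, mem_skewMatrix_iff]

theorem frobeniusForm_differentialAtOne_apply (A B Z : Matrix n n ℂ)
    (v : SkewMatrix n × SkewMatrix n × SkewMatrix n × SkewMatrix n) :
    frobeniusForm n (differentialAtOne A B v) Z =
      -(A * Zᴴ * v.1).trace.re + (Zᴴ * A * v.2.2.1).trace.re + (B * Zᴴ * v.2.1).trace.re
        - (Zᴴ * B * v.2.2.2).trace.re := by
  rw [frobeniusForm_apply, re_trace_conjTranspose_mul_comm]
  simp only [differentialAtOne, LinearMap.coe_mk, AddHom.coe_mk, Matrix.mul_add, Matrix.mul_sub,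
    Matrix.mul_neg, trace_add, trace_sub, trace_neg, Complex.add_re, Complex.sub_re,
    Complex.neg_re, ← Matrix.mul_assoc]
  rw [trace_mul_cycle Zᴴ (v.1 : Matrix n n ℂ) A, trace_mul_cycle Zᴴ (v.2.1 : Matrix n n ℂ) B]

theorem mem_orthogonal_range_differentialAtOne_iff (A B Z : Matrix n n ℂ) :
    Z ∈ (frobeniusForm n).orthogonal (LinearMap.range (differentialAtOne A B)) ↔
      (Aᴴ * Z).IsHermitian ∧ (A * Zᴴ).IsHermitian ∧
        (Bᴴ * Z).IsHermitian ∧ (B * Zᴴ).IsHermitian := by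
  have hconj (P : Matrix n n ℂ) : (Pᴴ * Z).IsHermitian ↔ (Zᴴ * P).IsHermitian := by
    rw [← isHermitian_conjTranspose_iff, conjTranspose_mul, conjTranspose_conjTranspose]
  simp only [hconj, isHermitian_iff_forall_mem_skewMatrix_re_trace_mul_eq_zero,
    LinearMap.BilinForm.mem_orthogonal_iff, LinearMap.mem_range, forall_exists_index,
    forall_apply_eq_imp_iff, frobeniusForm_differentialAtOne_apply]
  constructor
  · intro h
    refine ⟨fun X hX => ?_, fun X hX => ?_, fun X hX => ?_, fun X hX => ?_⟩
    · simpa using h (0, 0, ⟨X, hX⟩, 0)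
    · simpa using h (⟨X, hX⟩, 0, 0, 0)
    · simpa using h (0, 0, 0, ⟨X, hX⟩)
    · simpa using h (0, ⟨X, hX⟩, 0, 0)
  · rintro ⟨hA₁, hA₂, hB₁, hB₂⟩ ⟨⟨X₁, hX₁⟩, ⟨X₂, hX₂⟩, ⟨Y₁, hY₁⟩, ⟨Y₂, hY₂⟩⟩
    simp [hA₁ Y₁ hY₁, hA₂ X₁ hX₁, hB₁ Y₂ hY₂, hB₂ X₂ hX₂]

end

/-- The differential of `Π` at `(I,I,I,I)`, i.e. the real-linear map
`(X₁,X₂,Y₁,Y₂) ↦ −X₁A + AY₁ + X₂B − BY₂` on quadruples of skew-adjoint matrices,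
is surjective onto `M_d(ℂ)` iff the only `Z` making `A*Z, AZ*, B*Z, BZ*` all
selfadjoint is `Z = 0`. -/
theorem stmt_8 {d : ℕ} (A B : Matrix (Fin d) (Fin d) ℂ) :
    (∀ M : Matrix (Fin d) (Fin d) ℂ,
      ∃ X1 X2 Y1 Y2 : Matrix (Fin d) (Fin d) ℂ,
        X1ᴴ = -X1 ∧ X2ᴴ = -X2 ∧ Y1ᴴ = -Y1 ∧ Y2ᴴ = -Y2 ∧
        -(X1 * A) + A * Y1 + X2 * B - B * Y2 = M) ↔
      (∀ Z : Matrix (Fin d) (Fin d) ℂ,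
        (Aᴴ * Z).IsHermitian → (A * Zᴴ).IsHermitian →
        (Bᴴ * Z).IsHermitian → (B * Zᴴ).IsHermitian → Z = 0) := by
  rw [← range_differentialAtOne_eq_top_iff,
    eq_top_iff_orthogonal_eq_bot frobeniusForm_nondegenerate frobeniusForm_isSymm.isRefl,
    Submodule.eq_bot_iff]
  simp only [mem_orthogonal_range_differentialAtOne_iff, and_imp]

end LocalLidskii
end

section
/- Let A, B ∈ M_d(ℂ) be such that A*B and AB* are selfadjoint. Then there exist unitaries U, V ∈ U(d) and a vector β ∈ ℝ^d such that U* A V = D_{s(A)} and U* B V = D_β, where D_x denotes the diagonal matrix with main diagonal x. -/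
open Module

section StarMonoid

variable {R : Type*} [Monoid R] [StarMul R] {a b : R}

theorem star_mul_self_mul_star_mul_self_eq_sq (h : IsSelfAdjoint (a * star b)) :
    star a * a * (star b * b) = (star a * b) ^ 2 := by
  have hba : b * star a = a * star b := by simpa using h.star_eq
  calc star a * a * (star b * b) = star a * (a * star b) * b := by simp only [mul_assoc]
    _ = star a * (b * star a) * b := by rw [hba]
    _ = (star a * b) ^ 2 := by simp only [sq, mul_assoc]

theorem commute_star_mul_self_star_mul (h₁ : IsSelfAdjoint (star a * b))
    (h₂ : IsSelfAdjoint (a * star b)) : Commute (star a * a) (star a * b) := by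
  have hab : star b * a = star a * b := by simpa using h₁.star_eq
  have hba : b * star a = a * star b := by simpa using h₂.star_eq
  calc star a * a * (star a * b) = star a * a * (star b * a) := by rw [hab]
    _ = star a * (a * star b) * a := by simp only [mul_assoc]
    _ = star a * (b * star a) * a := by rw [hba]
    _ = star a * b * (star a * a) := by simp only [mul_assoc]

theorem commute_star_mul_self_star_mul_self (h₁ : IsSelfAdjoint (star a * b))
    (h₂ : IsSelfAdjoint (a * star b)) : Commute (star a * a) (star b * b) := by
  have hab : star b * a = star a * b := by simpa using h₁.star_eq
  have hba : b * star a = a * star b := by simpa using h₂.star_eq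
  have h₂' : IsSelfAdjoint (b * star a) := by rw [IsSelfAdjoint, star_mul, star_star, hba]
  rw [Commute, SemiconjBy, star_mul_self_mul_star_mul_self_eq_sq h₂,
    star_mul_self_mul_star_mul_self_eq_sq h₂', hab]

theorem commute_star_mul_star_mul_self (h₁ : IsSelfAdjoint (star a * b))
    (h₂ : IsSelfAdjoint (a * star b)) : Commute (star a * b) (star b * b) := by
  have hab : star b * a = star a * b := by simpa using h₁.star_eq
  have hba : b * star a = a * star b := by simpa using h₂.star_eq
  calc star a * b * (star b * b) = star b * a * (star b * b) := by rw [hab]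
    _ = star b * (a * star b) * b := by simp only [mul_assoc]
    _ = star b * (b * star a) * b := by rw [hba]
    _ = star b * b * (star a * b) := by simp only [mul_assoc]

end StarMonoid

section InnerProductSpace

variable {𝕜 E : Type*} [RCLike 𝕜] [NormedAddCommGroup E] [InnerProductSpace 𝕜 E]

theorem eq_zero_or_exists_real_smul_of_norm_inner_eq {x y : E} {k : ℝ}
    (hk : inner 𝕜 x y = k) (hxy : ‖inner 𝕜 x y‖ = ‖x‖ * ‖y‖) :
    x = 0 ∨ ∃ r : ℝ, y = (r : 𝕜) • x := by
  have : x = 0 ∨ y = (inner 𝕜 x y / inner 𝕜 x x) • x :=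
    ((norm_inner_eq_norm_tfae 𝕜 x y).out 0 1).mp hxy
  refine this.imp id fun h => ⟨k / ‖x‖ ^ 2, ?_⟩
  rw [h, hk, inner_self_eq_norm_sq_to_K]
  push_cast
  rfl

variable [FiniteDimensional 𝕜 E]

theorem exists_orthonormalBasis_eq_norm_smul {ι : Type*} [Fintype ι]
    (hcard : finrank 𝕜 E = Fintype.card ι) {w : ι → E}
    (hw : Pairwise fun i j => inner 𝕜 (w i) (w j) = 0) :
    ∃ u : OrthonormalBasis ι 𝕜 E, ∀ j, w j = (‖w j‖ : 𝕜) • u j := by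
  let s : Set ι := {j | w j ≠ 0}
  let u₀ : ι → E := fun j => (‖w j‖⁻¹ : 𝕜) • w j
  have hu₀ : Orthonormal 𝕜 (s.domRestrict u₀) := by
    refine ⟨fun ⟨j, hj⟩ => ?_, fun i j hij => ?_⟩
    · simp [u₀, norm_smul, inv_mul_cancel₀ (norm_ne_zero_iff.mpr hj)]
    · simp [u₀, inner_smul_left, inner_smul_right, hw (Subtype.coe_ne_coe.mpr hij)]
  obtain ⟨u, hu⟩ := hu₀.exists_orthonormalBasis_extension_of_card_eq hcard
  refine ⟨u, fun j => ?_⟩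
  by_cases hj : w j = 0
  · simp [hj]
  · rw [hu j hj, smul_smul, mul_inv_cancel₀ (by simpa using hj), one_smul]

theorem exists_orthonormalBasis_eq_smul_of_orthogonal_pairs {ι : Type*} [Fintype ι]
    (hcard : finrank 𝕜 E = Fintype.card ι) {a b : ι → E}
    (haa : Pairwise fun i j => inner 𝕜 (a i) (a j) = 0)
    (hab : Pairwise fun i j => inner 𝕜 (a i) (b j) = 0)
    (hbb : Pairwise fun i j => inner 𝕜 (b i) (b j) = 0)
    (hcol : ∀ j, a j = 0 ∨ ∃ r : ℝ, b j = (r : 𝕜) • a j) :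
    ∃ (u : OrthonormalBasis ι 𝕜 E) (β : ι → ℝ),
      ∀ j, a j = (‖a j‖ : 𝕜) • u j ∧ b j = (β j : 𝕜) • u j := by
  classical
  let w : ι → E := fun j => if a j = 0 then b j else a j
  have hw : Pairwise fun i j => inner 𝕜 (w i) (w j) = 0 := fun i j hij => by
    have hba : inner 𝕜 (b i) (a j) = 0 := by rw [← inner_conj_symm, hab hij.symm, map_zero]
    simp only [w]
    split_ifs <;> simp only [haa hij, hab hij, hba, hbb hij]
  obtain ⟨u, hu⟩ := exists_orthonormalBasis_eq_norm_smul hcard hw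
  suffices ∀ j, ∃ β : ℝ, a j = (‖a j‖ : 𝕜) • u j ∧ b j = (β : 𝕜) • u j by
    choose β hβ using this
    exact ⟨u, β, hβ⟩
  intro j
  have hwj := hu j
  by_cases ha : a j = 0
  · simp only [w, if_pos ha] at hwj
    exact ⟨‖b j‖, by simp [ha], hwj⟩
  · simp only [w, if_neg ha] at hwj
    obtain ⟨r, hr⟩ := (hcol j).resolve_left ha
    refine ⟨r * ‖a j‖, hwj, ?_⟩
    rw [hr]
    nth_rw 1 [hwj]
    rw [smul_smul, RCLike.ofReal_mul]

theorem LinearMap.IsSymmetric.exists_orthonormalBasis_of_pairwise_commute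
    {ι : Type*} {n : ℕ} (hn : finrank 𝕜 E = n) {T : ι → E →ₗ[𝕜] E}
    (hT : ∀ i, (T i).IsSymmetric) (hC : Pairwise (Function.onFun Commute T)) :
    ∃ (v : OrthonormalBasis (Fin n) 𝕜 E) (χ : Fin n → ι → ℝ),
      ∀ a i, T i (v a) = (χ a i : 𝕜) • v a := by
  classical
  let V : (ι → 𝕜) → Submodule 𝕜 E := fun χ => ⨅ i, End.eigenspace (T i) (χ i)
  have horth : OrthogonalFamily 𝕜 (fun χ => V χ) (fun χ => (V χ).subtypeₗᵢ) :=
    orthogonalFamily_iInf_eigenspaces hT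
  have : Fintype {χ // V χ ≠ ⊥} := horth.independent.fintypeNeBotOfFiniteDimensional
  have horth' := horth.comp (Subtype.coe_injective (p := fun χ => V χ ≠ ⊥))
  have hint : DirectSum.IsInternal (fun χ : {χ // V χ ≠ ⊥} => V χ) := by
    refine (DirectSum.isInternal_submodule_iff_iSupIndep_and_iSup_eq_top _).mpr
      ⟨horth.independent.comp Subtype.coe_injective, ?_⟩
    rw [iSup_ne_bot_subtype]
    exact iSup_iInf_eq_top_of_commute hT hC
  let idx := fun a => (hint.subordinateOrthonormalBasisIndex hn a horth').val
  have heigen : ∀ a i, T i (hint.subordinateOrthonormalBasis hn horth' a) =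
      idx a i • hint.subordinateOrthonormalBasis hn horth' a := fun a i =>
    End.mem_eigenspace_iff.mp <|
      (Submodule.mem_iInf _).mp (hint.subordinateOrthonormalBasis_subordinate hn a horth') i
  have hreal : ∀ a i, idx a i = ((RCLike.re (idx a i) : ℝ) : 𝕜) := fun a i =>
    (RCLike.conj_eq_iff_re.mp <| (hT i).conj_eigenvalue_eq_self <|
      End.hasEigenvalue_of_hasEigenvector ⟨End.mem_eigenspace_iff.mpr (heigen a i),
        (hint.subordinateOrthonormalBasis hn horth').toBasis.ne_zero a⟩).symm
  exact ⟨_, fun a i => RCLike.re (idx a i), fun a i => hreal a i ▸ heigen a i⟩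

theorem inner_apply_apply_eq_of_star_mul_apply_eq {S T : E →ₗ[𝕜] E} {x y : E} {c : 𝕜}
    (h : (star S * T) y = c • y) :
    inner 𝕜 (S x) (T y) = c * inner 𝕜 x y := by
  rw [← LinearMap.adjoint_inner_right, ← LinearMap.star_eq_adjoint, ← Module.End.mul_apply, h,
    inner_smul_right]

/-- `k² = p m` is the equality case of Cauchy–Schwarz for `S (v j)` and `T (v j)`, so both are
real multiples of one unit vector. -/
theorem exists_orthonormalBasis_of_joint_eigenbasis {n : ℕ} (hn : finrank 𝕜 E = n)
    {S T : E →ₗ[𝕜] E} (v : OrthonormalBasis (Fin n) 𝕜 E) {p k m : Fin n → ℝ}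
    (hSS : ∀ j, (star S * S) (v j) = (p j : 𝕜) • v j)
    (hST : ∀ j, (star S * T) (v j) = (k j : 𝕜) • v j)
    (hTT : ∀ j, (star T * T) (v j) = (m j : 𝕜) • v j) (hkpm : ∀ j, k j ^ 2 = p j * m j) :
    ∃ (u : OrthonormalBasis (Fin n) 𝕜 E) (β : Fin n → ℝ),
      ∀ j, S (v j) = (√(p j) : 𝕜) • u j ∧ T (v j) = (β j : 𝕜) • u j := by
  have hgram : ∀ {X Y : E →ₗ[𝕜] E} {c : Fin n → ℝ},
      (∀ j, (star X * Y) (v j) = (c j : 𝕜) • v j) →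
      ∀ i j, inner 𝕜 (X (v i)) (Y (v j)) = if i = j then (c j : 𝕜) else 0 := by
    intro X Y c h i j
    rw [inner_apply_apply_eq_of_star_mul_apply_eq (h j), orthonormal_iff_ite.mp v.orthonormal]
    simp
  have hnorm : ∀ {X : E →ₗ[𝕜] E} {c : Fin n → ℝ},
      (∀ j, (star X * X) (v j) = (c j : 𝕜) • v j) → ∀ j, ‖X (v j)‖ ^ 2 = c j := by
    intro X c h j
    have h := hgram h j j
    rw [if_pos rfl, inner_self_eq_norm_sq_to_K] at h
    exact_mod_cast h
  have hcs : ∀ j, ‖inner 𝕜 (S (v j)) (T (v j))‖ = ‖S (v j)‖ * ‖T (v j)‖ := fun j => by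
    rw [hgram hST, if_pos rfl, RCLike.norm_ofReal, ← Real.sqrt_sq_eq_abs, hkpm, ← hnorm hSS,
      ← hnorm hTT, ← mul_pow, Real.sqrt_sq (by positivity)]
  obtain ⟨u, β, huβ⟩ := exists_orthonormalBasis_eq_smul_of_orthogonal_pairs (a := S ∘ v)
    (b := T ∘ v) (by simpa using hn)
    (fun i j hij => by simpa [hij] using hgram hSS i j)
    (fun i j hij => by simpa [hij] using hgram hST i j)
    (fun i j hij => by simpa [hij] using hgram hTT i j)
    (fun j => eq_zero_or_exists_real_smul_of_norm_inner_eq (by simpa using hgram hST j j) (hcs j))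
  refine ⟨u, β, fun j => ⟨?_, (huβ j).2⟩⟩
  rw [← hnorm hSS, Real.sqrt_sq (norm_nonneg _)]
  exact (huβ j).1

theorem LinearMap.exists_orthonormalBasis_apply_eq_smul_of_isSelfAdjoint {n : ℕ}
    (hn : finrank 𝕜 E = n) {S T : E →ₗ[𝕜] E} (h₁ : IsSelfAdjoint (star S * T))
    (h₂ : IsSelfAdjoint (S * star T)) :
    ∃ (u v : OrthonormalBasis (Fin n) 𝕜 E) (p β : Fin n → ℝ), ∀ j,
      (star S * S) (v j) = (p j : 𝕜) • v j ∧ S (v j) = (√(p j) : 𝕜) • u j ∧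
        T (v j) = (β j : 𝕜) • u j := by
  let G : Fin 3 → E →ₗ[𝕜] E := ![star S * S, star S * T, star T * T]
  have hG : ∀ i, (G i).IsSymmetric := by
    intro i
    rw [LinearMap.isSymmetric_iff_isSelfAdjoint]
    fin_cases i
    exacts [.star_mul_self S, h₁, .star_mul_self T]
  have hGC : Pairwise (Function.onFun Commute G) := by
    have c01 := commute_star_mul_self_star_mul h₁ h₂
    have c02 := commute_star_mul_self_star_mul_self h₁ h₂
    have c12 := commute_star_mul_star_mul_self h₁ h₂
    intro i j hij
    fin_cases i <;> fin_cases j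
    all_goals first
      | exact absurd rfl hij
      | exact c01 | exact c02 | exact c12 | exact c01.symm | exact c02.symm | exact c12.symm
  obtain ⟨v, χ, hχ⟩ := LinearMap.IsSymmetric.exists_orthonormalBasis_of_pairwise_commute hn hG hGC
  have hSS : ∀ j, (star S * S) (v j) = (χ j 0 : 𝕜) • v j := fun j => hχ j 0
  have hST : ∀ j, (star S * T) (v j) = (χ j 1 : 𝕜) • v j := fun j => hχ j 1
  have hTT : ∀ j, (star T * T) (v j) = (χ j 2 : 𝕜) • v j := fun j => hχ j 2
  have hkpm : ∀ j, χ j 1 ^ 2 = χ j 0 * χ j 2 := fun j => by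
    have h := congrArg (· (v j)) (star_mul_self_mul_star_mul_self_eq_sq h₂)
    simp only [sq, Module.End.mul_apply (star S * S), Module.End.mul_apply (star S * T), hSS,
      hST, hTT, map_smul, smul_smul] at h
    have h' : χ j 2 * χ j 0 = χ j 1 * χ j 1 := by
      exact_mod_cast smul_left_injective 𝕜 (v.toBasis.ne_zero j) h
    linear_combination -h'
  obtain ⟨u, β, huβ⟩ := exists_orthonormalBasis_of_joint_eigenbasis hn v hSS hST hTT hkpm
  exact ⟨u, v, fun j => χ j 0, β, fun j => ⟨hSS j, huβ j⟩⟩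

end InnerProductSpace

section Matrix

open Matrix Polynomial

variable {𝕜 : Type*} [RCLike 𝕜] {n : Type*} [Fintype n] [DecidableEq n]

theorem Matrix.toEuclideanLin_mul (M N : Matrix n n 𝕜) :
    toEuclideanLin (M * N) = toEuclideanLin M * toEuclideanLin N :=
  toLpLin_mul_same _ _ _

theorem Matrix.toEuclideanLin_conjTranspose (M : Matrix n n 𝕜) :
    toEuclideanLin Mᴴ = star (toEuclideanLin M) :=
  toEuclideanLin_conjTranspose_eq_adjoint M

theorem Matrix.IsHermitian.isSelfAdjoint_toEuclideanLin {M : Matrix n n 𝕜} (hM : M.IsHermitian) :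
    IsSelfAdjoint (toEuclideanLin M) :=
  (LinearMap.isSymmetric_iff_isSelfAdjoint _).mp (isSymmetric_toEuclideanLin_iff.mpr hM)

theorem Matrix.charpoly_eq_prod_of_orthonormalBasis (M : Matrix n n 𝕜)
    (v : OrthonormalBasis n 𝕜 (EuclideanSpace 𝕜 n)) {μ : n → 𝕜}
    (hv : ∀ j, toEuclideanLin M (v j) = μ j • v j) :
    M.charpoly = ∏ j, (X - C (μ j)) := by
  have hdiag : LinearMap.toMatrix v.toBasis v.toBasis (toEuclideanLin M) = diagonal μ := by
    ext i j
    rcases eq_or_ne i j with rfl | hij <;> simp [LinearMap.toMatrix_apply, *]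
  rw [← charpoly_diagonal, ← hdiag, LinearMap.charpoly_toMatrix,
    ← LinearMap.charpoly_toMatrix _ (EuclideanSpace.basisFun n 𝕜).toBasis]
  congr 1
  ext i j
  simp [LinearMap.toMatrix_apply]

theorem conjTranspose_toMatrix_mul_mul_toMatrix_eq_diagonal
    (u v : OrthonormalBasis n 𝕜 (EuclideanSpace 𝕜 n)) (M : Matrix n n 𝕜) {c : n → 𝕜}
    (h : ∀ j, toEuclideanLin M (v j) = c j • u j) :
    ((EuclideanSpace.basisFun n 𝕜).toBasis.toMatrix u)ᴴ * M *
      (EuclideanSpace.basisFun n 𝕜).toBasis.toMatrix v = diagonal c := by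
  have hcol : M * (EuclideanSpace.basisFun n 𝕜).toBasis.toMatrix v =
      (EuclideanSpace.basisFun n 𝕜).toBasis.toMatrix u * diagonal c := by
    ext i j
    rw [mul_diagonal]
    simpa [Module.Basis.toMatrix_apply, mul_apply, mulVec, dotProduct, mul_comm]
      using congrArg (fun x => x i) (h j)
  rw [mul_assoc, hcol, ← mul_assoc,
    OrthonormalBasis.toMatrix_orthonormalBasis_conjTranspose_mul_self, one_mul]

end Matrix

namespace LocalLidskii

open Matrix

theorem sortDesc_eq_of_perm {n : ℕ} {f g : Fin n → ℝ} (hfg : (List.ofFn f).Perm (List.ofFn g)) :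
    sortDesc f = sortDesc g := by
  have hsorted : f ∘ Tuple.sort f = g ∘ Tuple.sort g :=
    List.ofFn_injective <| List.Perm.eq_of_sortedLE (Tuple.monotone_sort f).sortedLE_ofFn
      (Tuple.monotone_sort g).sortedLE_ofFn <|
      ((Equiv.Perm.ofFn_comp_perm _ f).trans hfg).trans (Equiv.Perm.ofFn_comp_perm _ g).symm
  funext i
  exact congrFun hsorted i.rev

theorem sv_eq_sortDesc_of_orthonormalBasis {d : ℕ} (A : Matrix (Fin d) (Fin d) ℂ)
    (v : OrthonormalBasis (Fin d) ℂ (EuclideanSpace ℂ (Fin d))) {p : Fin d → ℝ}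
    (hv : ∀ j, toEuclideanLin (Aᴴ * A) (v j) = (p j : ℂ) • v j) :
    sv A = sortDesc fun j => √(p j) := by
  have hroots := (isHermitian_conjTranspose_mul_self A).roots_charpoly_eq_eigenvalues
  rw [charpoly_eq_prod_of_orthonormalBasis _ v hv, Polynomial.roots_prod _ _ (by
    simp [Finset.prod_ne_zero_iff, Polynomial.X_sub_C_ne_zero])] at hroots
  simp only [Polynomial.roots_X_sub_C, Multiset.bind_singleton, Fin.univ_val_map,
    Multiset.coe_eq_coe] at hroots
  refine sortDesc_eq_of_perm ?_
  simpa [List.map_ofFn, Function.comp_def] using (hroots.map fun z : ℂ => √z.re).symm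

/-- (Eckart–Young) If `A*B` and `AB*` are selfadjoint then `A` and `B` admit a
simultaneous reduction: `U* A V = D_{s(A)}` and `U* B V = D_β` with `β ∈ ℝ^d`. -/
theorem stmt_10 {d : ℕ} (A B : Matrix (Fin d) (Fin d) ℂ)
    (h1 : (Aᴴ * B).IsHermitian) (h2 : (A * Bᴴ).IsHermitian) :
    ∃ U V : Matrix (Fin d) (Fin d) ℂ,
      U ∈ Matrix.unitaryGroup (Fin d) ℂ ∧ V ∈ Matrix.unitaryGroup (Fin d) ℂ ∧
      ∃ β : Fin d → ℝ,
        Uᴴ * A * V = Matrix.diagonal (fun i => (sv A i : ℂ)) ∧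
        Uᴴ * B * V = Matrix.diagonal (fun i => (β i : ℂ)) := by
  have h₁ := h1.isSelfAdjoint_toEuclideanLin
  have h₂ := h2.isSelfAdjoint_toEuclideanLin
  rw [toEuclideanLin_mul, toEuclideanLin_conjTranspose] at h₁ h₂
  obtain ⟨u, v, p, β, huv⟩ := LinearMap.exists_orthonormalBasis_apply_eq_smul_of_isSelfAdjoint
    finrank_euclideanSpace_fin h₁ h₂
  have hsv : sv A = sortDesc fun j => √(p j) := sv_eq_sortDesc_of_orthonormalBasis A v
    fun j => by rw [toEuclideanLin_mul, toEuclideanLin_conjTranspose]; exact (huv j).1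
  -- `sortDesc x i = x (σ i)` by the definition of `sortDesc`
  let σ : Equiv.Perm (Fin d) := Fin.revPerm.trans (Tuple.sort fun j => √(p j))
  have hU := (EuclideanSpace.basisFun (Fin d) ℂ).toMatrix_orthonormalBasis_mem_unitary
  refine ⟨_, _, hU (u.reindex σ.symm), hU (v.reindex σ.symm), fun i => β (σ i),
    conjTranspose_toMatrix_mul_mul_toMatrix_eq_diagonal _ _ _ fun j => ?_,
    conjTranspose_toMatrix_mul_mul_toMatrix_eq_diagonal _ _ _ fun j => ?_⟩
  · rw [hsv, u.reindex_apply, v.reindex_apply, Equiv.symm_symm]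
    exact (huv (σ j)).2.1
  · rw [u.reindex_apply, v.reindex_apply, Equiv.symm_symm]
    exact (huv (σ j)).2.2

end LocalLidskii
end

section
/- Let N be a strictly convex unitarily invariant norm on M_d(ℂ) and let A, B ∈ M_d(ℂ) be such that s(A) is submajorized by s(B) (s(A) ≺_w s(B)) and N(A) = N(B). Then s(A) = s(B). -/
namespace LocalLidskii

open Matrix
open scoped ComplexOrder

/-!
Let `ν = diagNorm N`, i.e. `ν z = N (diagonal z)` for `z ∈ ℝ^d`. Unitary invariance makes `ν`
invariant under permutations and sign changes of coordinates, and the singular value decomposition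
gives `N A = ν (s A)`. A non-increasing `x ≥ 0` submajorized by `y ≥ 0` is reached from `y` by
finitely many elementary moves: moving mass `δ` from `y j` to `y k` when `2 δ ≤ y j - y k`, or
lowering a positive coordinate. Each move replaces `y` by a proper convex combination of `y` and a
permuted or sign-flipped copy of `y`, which has the same `ν`-value but is different, so strict
convexity of `N` makes `ν` drop strictly along every move. Hence `s A ≠ s B` would force
`N A < N B`.
-/

open Finset

section Majorization

variable {d : ℕ}

noncomputable def prefixSum (z : Fin d → ℝ) (m : ℕ) : ℝ :=
  ∑ i : Fin d with i.val < m, z i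

lemma prefixSum_add (z w : Fin d → ℝ) (m : ℕ) :
    prefixSum (z + w) m = prefixSum z m + prefixSum w m :=
  sum_add_distrib

lemma prefixSum_sub (z w : Fin d → ℝ) (m : ℕ) :
    prefixSum (z - w) m = prefixSum z m - prefixSum w m :=
  sum_sub_distrib ..

lemma prefixSum_single (k : Fin d) (δ : ℝ) (m : ℕ) :
    prefixSum (Pi.single k δ) m = if (k : ℕ) < m then δ else 0 := by
  simp [prefixSum, sum_pi_single']

lemma prefixSum_le_sum {z : Fin d → ℝ} (hz : 0 ≤ z) (m : ℕ) : prefixSum z m ≤ ∑ i, z i :=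
  sum_le_univ_sum_of_nonneg hz

lemma prefixSum_eq_sum {z : Fin d → ℝ} {m : ℕ} (hz : ∀ i : Fin d, m ≤ i → z i = 0) :
    prefixSum z m = ∑ i, z i :=
  sum_subset (subset_univ _) fun i _ hi => hz i (by simpa using hi)

lemma sum_eq_prefixSum (z : Fin d → ℝ) : ∑ i, z i = prefixSum z d :=
  (prefixSum_eq_sum fun i hi => absurd i.isLt hi.not_gt).symm

lemma card_filter_lt_card_filter {ι : Type*} [Fintype ι] {p q : ι → Prop} [DecidablePred p]
    [DecidablePred q] (hpq : ∀ i, p i → q i) {a : ι} (hqa : q a) (hpa : ¬ p a) :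
    #{i | p i} < #{i | q i} :=
  card_lt_card <| (ssubset_iff_of_subset (monotone_filter_right _ fun i _ => hpq i)).2
    ⟨a, by simpa using hqa, by simpa using hpa⟩

lemma exists_transfer_pair {x y : Fin d → ℝ} (hsub : ∀ m, prefixSum x m ≤ prefixSum y m)
    (hsum : ∑ i, x i = ∑ i, y i) (hxy : x ≠ y) :
    ∃ j k, j < k ∧ x j < y j ∧ y k < x k ∧
      ∀ m : ℕ, (j : ℕ) < m → m ≤ k → y j - x j ≤ prefixSum y m - prefixSum x m := by
  -- `k` is the first index where `y` drops below `x`, so `y - x ≥ 0` on every index before it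
  obtain ⟨k, hk, hkmin⟩ : ∃ k ∈ ({i | y i < x i} : Finset (Fin d)),
      ∀ i ∈ ({i | y i < x i} : Finset (Fin d)), k ≤ i := by
    refine exists_min_image _ id ?_
    by_contra h
    have hle : ∀ i ∈ univ, x i ≤ y i := fun i _ => not_lt.1 fun hi => h ⟨i, by simpa using hi⟩
    exact hxy (funext fun i => (sum_eq_sum_iff_of_le hle).1 hsum i (mem_univ i))
  simp only [mem_filter, mem_univ, true_and] at hk hkmin
  have hbelow : ∀ i, i < k → x i ≤ y i := fun i hi => not_lt.1 fun h => (hkmin i h).not_gt hi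
  obtain ⟨j, hjk, hj⟩ : ∃ j < k, x j < y j := by
    by_contra! h
    refine (hsub (k + 1)).not_gt (sum_lt_sum (fun i hi => ?_) ⟨k, by simp, hk⟩)
    rcases (Fin.le_def.2 (Nat.lt_succ_iff.1 (mem_filter.1 hi).2)).lt_or_eq with hik | rfl
    · exact h i hik
    · exact hk.le
  refine ⟨j, k, hjk, hj, hk, fun m hjm hmk => ?_⟩
  rw [← prefixSum_sub]
  exact single_le_sum (f := y - x)
    (fun i hi => sub_nonneg.2 (hbelow i (Fin.lt_def.2 ((mem_filter.1 hi).2.trans_le hmk))))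
    (by simpa using hjm)

lemma exists_transfer_step {x y : Fin d → ℝ} (hx : Antitone x)
    (hsub : ∀ m, prefixSum x m ≤ prefixSum y m) (hsum : ∑ i, x i = ∑ i, y i) (hxy : x ≠ y) :
    ∃ (j k : Fin d) (δ : ℝ), 0 < δ ∧ 2 * δ ≤ y j - y k ∧
      (∀ m, prefixSum x m ≤ prefixSum (y - Pi.single j δ + Pi.single k δ) m) ∧
      ∑ i, x i = ∑ i, (y - Pi.single j δ + Pi.single k δ : Fin d → ℝ) i ∧
      #{i | x i ≠ (y - Pi.single j δ + Pi.single k δ : Fin d → ℝ) i} < #{i | x i ≠ y i} := by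
  obtain ⟨j, k, hjk, hj, hk, hgap⟩ := exists_transfer_pair hsub hsum hxy
  set δ := min (y j - x j) (x k - y k) with hδ
  have hδj : δ ≤ y j - x j := min_le_left ..
  have hδk : δ ≤ x k - y k := min_le_right ..
  set y' := y - Pi.single j δ + Pi.single k δ
  have hprefix : ∀ m, prefixSum y' m =
      prefixSum y m - (if (j : ℕ) < m then δ else 0) + (if (k : ℕ) < m then δ else 0) := by
    intro m
    simp only [y', prefixSum_add, prefixSum_sub, prefixSum_single]
  refine ⟨j, k, δ, lt_min (sub_pos.2 hj) (sub_pos.2 hk), by linarith [hx hjk.le], fun m => ?_,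
    ?_, ?_⟩
  · have := hsub m
    rw [hprefix]
    by_cases hjm : (j : ℕ) < m
    · by_cases hkm : (k : ℕ) < m
      · simpa [hjm, hkm] using this
      · have := hgap m hjm (not_lt.1 hkm)
        simp only [hjm, hkm, if_true, if_false]
        linarith
    · have hkm : ¬ (k : ℕ) < m := fun h => hjm (lt_trans hjk h)
      simpa [hjm, hkm] using this
  · rw [sum_eq_prefixSum y', hprefix, if_pos j.isLt, if_pos k.isLt, ← sum_eq_prefixSum, hsum]
    ring
  · have hy'j : y' j = y j - δ := by simp [y', hjk.ne']
    have hy'k : y' k = y k + δ := by simp [y', hjk.ne']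
    have hagree : ∀ i, x i ≠ y' i → x i ≠ y i := by
      intro i hi
      by_cases hij : i = j
      · exact hij ▸ hj.ne
      by_cases hik : i = k
      · exact hik ▸ hk.ne'
      simpa [y', hij, hik] using hi
    rcases min_choice (y j - x j) (x k - y k) with h | h
    · exact card_filter_lt_card_filter (p := fun i => x i ≠ y' i) hagree hj.ne
        (not_not.2 (by rw [hy'j, hδ, h]; ring))
    · exact card_filter_lt_card_filter (p := fun i => x i ≠ y' i) hagree hk.ne'
        (not_not.2 (by rw [hy'k, hδ, h]; ring))

lemma exists_lower_step {x y : Fin d → ℝ} (hx0 : 0 ≤ x) (hy0 : 0 ≤ y)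
    (hsub : ∀ m, prefixSum x m ≤ prefixSum y m) (hdef : ∑ i, x i < ∑ i, y i) :
    ∃ (k : Fin d) (δ : ℝ), 0 < δ ∧ δ ≤ y k ∧ 0 ≤ y - Pi.single k δ ∧
      (∀ m, prefixSum x m ≤ prefixSum (y - Pi.single k δ) m) ∧
      (#{i | (y - Pi.single k δ : Fin d → ℝ) i ≠ 0} < #{i | y i ≠ 0} ∨
        ∑ i, x i = ∑ i, (y - Pi.single k δ : Fin d → ℝ) i) := by
  -- lowering the last nonzero entry of `y` only changes the prefix sums that equal `∑ i, y i`
  obtain ⟨k, hk, hkmax⟩ : ∃ k ∈ ({i | y i ≠ 0} : Finset (Fin d)),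
      ∀ i ∈ ({i | y i ≠ 0} : Finset (Fin d)), i ≤ k := by
    refine exists_max_image _ id ?_
    by_contra h
    have : ∑ i, y i = 0 := sum_eq_zero fun i _ => not_not.1 fun hi => h ⟨i, by simpa using hi⟩
    linarith [Fintype.sum_nonneg hx0]
  simp only [mem_filter, mem_univ, true_and] at hk hkmax
  set δ := min (y k) (∑ i, y i - ∑ i, x i) with hδ
  have hδk : δ ≤ y k := min_le_left ..
  have hδsum : δ ≤ ∑ i, y i - ∑ i, x i := min_le_right ..
  set y' := y - Pi.single k δ
  have hy'k : y' k = y k - δ := by simp [y']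
  refine ⟨k, δ, lt_min ((hy0 k).lt_of_ne (Ne.symm hk)) (sub_pos.2 hdef), hδk, fun i => ?_,
    fun m => ?_, ?_⟩
  · by_cases hik : i = k
    · simp [hik, hδk]
    · simpa [y', hik] using hy0 i
  · rw [prefixSum_sub, prefixSum_single]
    split_ifs with hkm
    · rw [prefixSum_eq_sum (z := y) fun i hi => not_not.1 fun h => ?_]
      · linarith [prefixSum_le_sum hx0 m]
      · exact absurd (hkmax i h) (not_le.2 (Fin.lt_def.2 (hkm.trans_le hi)))
    · simpa using hsub m
  · rcases min_choice (y k) (∑ i, y i - ∑ i, x i) with h | h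
    · refine Or.inl (card_filter_lt_card_filter (p := fun i => y' i ≠ 0) (fun i hi => ?_) hk
        (not_not.2 ?_))
      · by_cases hik : i = k
        · exact hik ▸ hk
        · simpa [y', hik] using hi
      · rw [hy'k, hδ, h, sub_self]
    · refine Or.inr ?_
      rw [sum_eq_prefixSum y', prefixSum_sub, prefixSum_single, if_pos k.isLt,
        ← sum_eq_prefixSum, hδ, h]
      ring

variable {φ : (Fin d → ℝ) → ℝ}

theorem eq_or_lt_of_majorized
    (hT : ∀ y j k δ, 0 < δ → 2 * δ ≤ y j - y k → φ (y - Pi.single j δ + Pi.single k δ) < φ y)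
    {x y : Fin d → ℝ} (hx : Antitone x) (hsub : ∀ m, prefixSum x m ≤ prefixSum y m)
    (hsum : ∑ i, x i = ∑ i, y i) : x = y ∨ φ x < φ y := by
  induction hn : #{i | x i ≠ y i} using Nat.strong_induction_on generalizing y with
  | _ n ih =>
  by_cases hxy : x = y
  · exact Or.inl hxy
  obtain ⟨j, k, δ, hδ, hδjk, hsub', hsum', hfewer⟩ := exists_transfer_step hx hsub hsum hxy
  have hstep := hT y j k δ hδ hδjk
  exact Or.inr ((ih _ (hn ▸ hfewer) hsub' hsum' rfl).elim (· ▸ hstep) (·.trans hstep))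

theorem eq_or_lt_of_submajorized
    (hT : ∀ y j k δ, 0 < δ → 2 * δ ≤ y j - y k → φ (y - Pi.single j δ + Pi.single k δ) < φ y)
    (hR : ∀ y k δ, 0 < δ → δ ≤ y k → φ (y - Pi.single k δ) < φ y)
    {x y : Fin d → ℝ} (hx : Antitone x) (hx0 : 0 ≤ x) (hy0 : 0 ≤ y)
    (hsub : ∀ m, prefixSum x m ≤ prefixSum y m) : x = y ∨ φ x < φ y := by
  induction hn : #{i | y i ≠ 0} using Nat.strong_induction_on generalizing y with
  | _ n ih =>
  rcases (show ∑ i, x i ≤ ∑ i, y i by simpa only [sum_eq_prefixSum] using hsub d).eq_or_lt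
    with hsum | hdef
  · exact eq_or_lt_of_majorized hT hx hsub hsum
  obtain ⟨k, δ, hδ, hδk, hy'0, hsub', hy'⟩ := exists_lower_step hx0 hy0 hsub hdef
  have hstep := hR y k δ hδ hδk
  refine Or.inr ((?_ : x = _ ∨ φ x < _).elim (· ▸ hstep) (·.trans hstep))
  rcases hy' with hfewer | hsum'
  · exact ih _ (hn ▸ hfewer) hy'0 hsub' rfl
  · exact eq_or_lt_of_majorized hT hx hsub' hsum'

end Majorization

section SortDesc

variable {n : ℕ}

lemma antitone_sortDesc (z : Fin n → ℝ) : Antitone (sortDesc z) :=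
  fun _ _ hab => Tuple.monotone_sort z (Fin.rev_le_rev.2 hab)

lemma sortDesc_eq_self {z : Fin n → ℝ} (hz : Antitone z) : sortDesc z = z := by
  have h := (Tuple.comp_sort_eq_comp_iff_monotone (σ := Fin.revPerm)).2
    (hz.comp Fin.rev_anti)
  funext i
  simpa [sortDesc] using (congrFun h i.rev).symm

lemma submaj_iff_prefixSum {x y : Fin n → ℝ} (hx : Antitone x) (hy : Antitone y) :
    Submaj x y ↔ ∀ m, prefixSum x m ≤ prefixSum y m := by
  simp only [Submaj, pSumDesc, sortDesc_eq_self hx, sortDesc_eq_self hy, prefixSum, sum_filter]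

end SortDesc

section Gauge

variable {d : ℕ} {N : Matrix (Fin d) (Fin d) ℂ → ℝ}

lemma IsUINorm.map_smul_add_smul_le (hN : IsUINorm d N) {a b : ℝ} (ha : 0 ≤ a) (hb : 0 ≤ b)
    (C D : Matrix (Fin d) (Fin d) ℂ) :
    N ((a : ℂ) • C + (b : ℂ) • D) ≤ a * N C + b * N D := by
  calc N ((a : ℂ) • C + (b : ℂ) • D) ≤ N ((a : ℂ) • C) + N ((b : ℂ) • D) := hN.add_le _ _
    _ = a * N C + b * N D := by
      rw [hN.smul_eq, hN.smul_eq, Complex.norm_real, Complex.norm_real, Real.norm_of_nonneg ha,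
        Real.norm_of_nonneg hb]

lemma IsUINorm.eq_of_map_smul_add_smul_eq (hN : IsUINorm d N) (hNsc : IsStrictlyConvexNorm d N)
    {t : ℝ} (ht0 : 0 < t) (ht : t ≤ 1 / 2) {C D : Matrix (Fin d) (Fin d) ℂ} (hCD : N C = N D)
    (h : N ((t : ℂ) • C + ((1 - t : ℝ) : ℂ) • D) = N D) : C = D := by
  -- the given point is the midpoint of `D` and `w`, which lies on the same segment
  set w := ((2 * t : ℝ) : ℂ) • C + ((1 - 2 * t : ℝ) : ℂ) • D with hw
  have hmid : (2 : ℂ)⁻¹ • (D + w) = (t : ℂ) • C + ((1 - t : ℝ) : ℂ) • D := by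
    rw [hw]; push_cast; module
  have hw_le : N w ≤ N D := by
    have := hN.map_smul_add_smul_le (a := 2 * t) (b := 1 - 2 * t) (by linarith) (by linarith) C D
    rw [hCD] at this
    linarith
  have hw_ge : N D ≤ N w := by
    have := hN.map_smul_add_smul_le (a := 1 / 2) (b := 1 / 2) (by norm_num) (by norm_num) D w
    rw [show ((1 / 2 : ℝ) : ℂ) • D + ((1 / 2 : ℝ) : ℂ) • w = (2 : ℂ)⁻¹ • (D + w) by
      push_cast; module, hmid, h] at this
    linarith
  have hDw : D = w := hNsc D w (le_antisymm hw_ge hw_le) (by rw [hmid, h])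
  have h2t : ((2 * t : ℝ) : ℂ) • (C - D) = 0 := by
    rw [← sub_eq_zero.2 hDw.symm, hw]; push_cast; module
  exact sub_eq_zero.1 ((smul_eq_zero.1 h2t).resolve_left (by exact_mod_cast (by positivity)))

noncomputable def diagNorm (N : Matrix (Fin d) (Fin d) ℂ → ℝ) (z : Fin d → ℝ) : ℝ :=
  N (diagonal fun i => (z i : ℂ))

lemma diagNorm_smul_add_smul_lt (hN : IsUINorm d N) (hNsc : IsStrictlyConvexNorm d N)
    {y z : Fin d → ℝ} (hz : diagNorm N z = diagNorm N y) (hne : z ≠ y) {t : ℝ} (ht0 : 0 < t)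
    (ht : t ≤ 1 / 2) : diagNorm N (t • z + (1 - t) • y) < diagNorm N y := by
  have hdiag : diagonal (fun i => ((t • z + (1 - t) • y) i : ℂ)) =
      (t : ℂ) • diagonal (fun i => (z i : ℂ)) +
        ((1 - t : ℝ) : ℂ) • diagonal fun i => (y i : ℂ) := by
    ext i j
    by_cases hij : i = j <;> simp [hij]
  refine lt_of_le_of_ne ?_ fun h => hne ?_
  · calc diagNorm N (t • z + (1 - t) • y) ≤ t * diagNorm N z + (1 - t) * diagNorm N y := by
          rw [diagNorm, hdiag]
          exact hN.map_smul_add_smul_le ht0.le (by linarith) _ _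
      _ = diagNorm N y := by rw [hz]; ring
  · have := hN.eq_of_map_smul_add_smul_eq hNsc ht0 ht hz (by rw [← hdiag]; exact h)
    funext i
    simpa using congrFun₂ this i i

lemma diagNorm_comp_perm (hN : IsUINorm d N) (y : Fin d → ℝ) (σ : Equiv.Perm (Fin d)) :
    diagNorm N (y ∘ σ) = diagNorm N y := by
  have hunitary : ∀ τ : Equiv.Perm (Fin d), τ.permMatrix ℂ ∈ unitaryGroup (Fin d) ℂ := fun τ => by
    rw [mem_unitaryGroup_iff', star_eq_conjTranspose, conjTranspose_permMatrix,
      ← permMatrix_mul, mul_inv_cancel, permMatrix_one]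
  have hconj : diagonal (fun i => ((y ∘ σ) i : ℂ)) =
      σ.permMatrix ℂ * diagonal (fun i => (y i : ℂ)) * σ⁻¹.permMatrix ℂ := by
    rw [Equiv.Perm.permMatrix, Equiv.Perm.permMatrix, PEquiv.toMatrix_toPEquiv_mul,
      PEquiv.mul_toMatrix_toPEquiv, submatrix_submatrix, Equiv.Perm.inv_def, Equiv.symm_symm]
    exact (submatrix_diagonal_equiv (fun i => (y i : ℂ)) σ).symm
  rw [diagNorm, hconj, hN.unitary_invariant _ _ _ (hunitary σ) (hunitary σ⁻¹), diagNorm]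

lemma diagNorm_mul_of_abs_eq_one (hN : IsUINorm d N) {ε : Fin d → ℝ} (hε : ∀ i, |ε i| = 1)
    (y : Fin d → ℝ) : diagNorm N (ε * y) = diagNorm N y := by
  have hunitary : diagonal (fun i => (ε i : ℂ)) ∈ unitaryGroup (Fin d) ℂ := by
    rw [mem_unitaryGroup_iff, star_eq_conjTranspose, diagonal_conjTranspose,
      diagonal_mul_diagonal, ← diagonal_one]
    congr 1
    funext i
    have : ε i * ε i = 1 := by rw [← abs_mul_abs_self, hε i, one_mul]
    simp only [Pi.star_apply, Complex.star_def, Complex.conj_ofReal]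
    exact_mod_cast this
  have := hN.unitary_invariant (diagonal fun i => (y i : ℂ)) _ 1 hunitary (one_mem _)
  rw [mul_one, diagonal_mul_diagonal] at this
  simpa [diagNorm] using this

lemma diagNorm_transfer_lt (hN : IsUINorm d N) (hNsc : IsStrictlyConvexNorm d N)
    (y : Fin d → ℝ) (j k : Fin d) {δ : ℝ} (hδ : 0 < δ) (hδjk : 2 * δ ≤ y j - y k) :
    diagNorm N (y - Pi.single j δ + Pi.single k δ) < diagNorm N y := by
  have hgap : 0 < y j - y k := by linarith
  have hjk : j ≠ k := by rintro rfl; simp at hgap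
  -- the transfer is a convex combination of `y` and `y` with entries `j`, `k` swapped
  have hcomb : y - Pi.single j δ + Pi.single k δ =
      (δ / (y j - y k)) • (y ∘ Equiv.swap j k) + (1 - δ / (y j - y k)) • y := by
    funext i
    simp only [Pi.add_apply, Pi.sub_apply, Pi.smul_apply, smul_eq_mul, Function.comp_apply,
      Pi.single_apply, Equiv.swap_apply_def]
    split_ifs <;> subst_vars <;> first | contradiction | (field_simp; ring)
  rw [hcomb]
  refine diagNorm_smul_add_smul_lt hN hNsc (diagNorm_comp_perm hN y _) (fun h => ?_)
    (div_pos hδ hgap) (by rw [div_le_iff₀ hgap]; linarith)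
  have := congrFun h j
  simp only [Function.comp_apply, Equiv.swap_apply_left] at this
  linarith

lemma diagNorm_sub_single_lt (hN : IsUINorm d N) (hNsc : IsStrictlyConvexNorm d N)
    (y : Fin d → ℝ) (k : Fin d) {δ : ℝ} (hδ : 0 < δ) (hδk : δ ≤ y k) :
    diagNorm N (y - Pi.single k δ) < diagNorm N y := by
  set ε : Fin d → ℝ := fun i => if i = k then -1 else 1
  have hyk : 0 < y k := hδ.trans_le hδk
  -- decreasing `y k` is a convex combination of `y` and `y` with the sign of `y k` flipped
  have hcomb : y - Pi.single k δ = (δ / (2 * y k)) • (ε * y) + (1 - δ / (2 * y k)) • y := by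
    funext i
    simp only [Pi.add_apply, Pi.sub_apply, Pi.smul_apply, smul_eq_mul, Pi.mul_apply,
      Pi.single_apply, ε]
    split_ifs <;> subst_vars <;> field_simp <;> ring
  rw [hcomb]
  refine diagNorm_smul_add_smul_lt hN hNsc
    (diagNorm_mul_of_abs_eq_one hN (fun i => by by_cases hik : i = k <;> simp [ε, hik]) y)
    (fun h => ?_) (by positivity) (by rw [div_le_iff₀ (by positivity)]; linarith)
  have := congrFun h k
  simp only [Pi.mul_apply, ε, if_true] at this
  linarith

lemma exists_unitary_mul_diagonal_of_conjTranspose_mul_self {n : Type*} [Fintype n]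
    [DecidableEq n] {M : Matrix n n ℂ} {g : n → ℝ}
    (hM : Mᴴ * M = diagonal fun i => ((g i ^ 2 : ℝ) : ℂ)) :
    ∃ Q ∈ unitaryGroup n ℂ, M = Q * diagonal fun i => (g i : ℂ) := by
  set col : n → EuclideanSpace ℂ n := fun j => WithLp.toLp 2 fun i => M i j
  have hcol : ∀ i j, inner ℂ (col i) (col j) = if i = j then ((g i ^ 2 : ℝ) : ℂ) else 0 := by
    intro i j
    rw [← diagonal_apply (fun i => ((g i ^ 2 : ℝ) : ℂ)), ← hM]
    simp [col, mul_apply, PiLp.inner_apply, mul_comm]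
  set v : n → EuclideanSpace ℂ n := fun j => ((g j)⁻¹ : ℂ) • col j
  have hv : Orthonormal ℂ (({j | g j ≠ 0} : Set n).domRestrict v) := by
    rw [orthonormal_iff_ite]
    rintro ⟨i, hi⟩ ⟨j, hj⟩
    simp only [Set.domRestrict, v, inner_smul_left, inner_smul_right, hcol, Subtype.mk.injEq]
    split_ifs with hij
    · subst hij
      have : (g i : ℂ) ≠ 0 := by exact_mod_cast hi
      simp only [map_inv₀, Complex.conj_ofReal, Complex.ofReal_pow]
      field_simp
    · simp
  obtain ⟨b, hb⟩ := hv.exists_orthonormalBasis_extension_of_card_eq (by simp)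
  refine ⟨_, (EuclideanSpace.basisFun n ℂ).toMatrix_orthonormalBasis_mem_unitary b, ?_⟩
  ext i j
  rw [mul_diagonal]
  simp only [Module.Basis.toMatrix_apply, OrthonormalBasis.coe_toBasis_repr_apply,
    EuclideanSpace.basisFun_repr]
  by_cases hj : g j = 0
  · have : col j = 0 := by
      rw [← inner_self_eq_zero (𝕜 := ℂ), hcol, if_pos rfl, hj]
      simp
    simpa [hj, col] using congrArg (· i) this
  · rw [hb j hj]
    have : (g j : ℂ) ≠ 0 := by exact_mod_cast hj
    simp only [v, col, PiLp.smul_apply, smul_eq_mul]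
    field_simp

lemma IsUINorm.map_eq_diagNorm_sv (hN : IsUINorm d N) (A : Matrix (Fin d) (Fin d) ℂ) :
    N A = diagNorm N (sv A) := by
  set hH := isHermitian_conjTranspose_mul_self A
  set g : Fin d → ℝ := fun i => √(hH.eigenvalues i)
  set W : Matrix (Fin d) (Fin d) ℂ := (hH.eigenvectorUnitary : Matrix (Fin d) (Fin d) ℂ)
  have hW : W ∈ unitaryGroup (Fin d) ℂ := hH.eigenvectorUnitary.2
  have hAW : (A * W)ᴴ * (A * W) = diagonal fun i => ((g i ^ 2 : ℝ) : ℂ) := by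
    have hdiag := hH.conjStarAlgAut_star_eigenvectorUnitary
    rw [Unitary.conjStarAlgAut_star_apply] at hdiag
    rw [conjTranspose_mul, ← star_eq_conjTranspose W, ← mul_assoc, mul_assoc (star W), hdiag]
    congr 1
    funext i
    simp [g, Real.sq_sqrt (eigenvalues_conjTranspose_mul_self_nonneg A i)]
  obtain ⟨Q, hQ, hAWQ⟩ := exists_unitary_mul_diagonal_of_conjTranspose_mul_self hAW
  have hA : A = Q * diagonal (fun i => (g i : ℂ)) * star W := by
    rw [← hAWQ, mul_assoc, mem_unitaryGroup_iff.1 hW, mul_one]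
  calc N A = N (Q * diagonal (fun i => (g i : ℂ)) * star W) := congrArg N hA
    _ = diagNorm N g := hN.unitary_invariant _ _ _ hQ (Unitary.star_mem hW)
    _ = diagNorm N (sv A) := (diagNorm_comp_perm hN g (Fin.revPerm.trans (Tuple.sort g))).symm

end Gauge

/-- If `s(A) ≺_w s(B)` and `N(A) = N(B)` for a strictly convex unitarily invariant
norm `N`, then `s(A) = s(B)`. -/
theorem stmt_19 {d : ℕ} (N : Matrix (Fin d) (Fin d) ℂ → ℝ)
    (hN : IsUINorm d N) (hNsc : IsStrictlyConvexNorm d N)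
    (A B : Matrix (Fin d) (Fin d) ℂ)
    (hsub : Submaj (sv A) (sv B)) (hNAB : N A = N B) :
    sv A = sv B := by
  have hsv : ∀ C : Matrix (Fin d) (Fin d) ℂ, Antitone (sv C) ∧ 0 ≤ sv C :=
    fun C => ⟨antitone_sortDesc _, fun _ => Real.sqrt_nonneg _⟩
  rcases eq_or_lt_of_submajorized (diagNorm_transfer_lt hN hNsc) (diagNorm_sub_single_lt hN hNsc)
    (hsv A).1 (hsv A).2 (hsv B).2 ((submaj_iff_prefixSum (hsv A).1 (hsv B).1).1 hsub) with h | h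
  · exact h
  · rw [← hN.map_eq_diagNorm_sv, ← hN.map_eq_diagNorm_sv, hNAB] at h
    exact absurd h (lt_irrefl _)

end LocalLidskii
end
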